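/- arXiv:1805.05681 — 15 statements merged into one kernel-verified Lean document; each statement's English description precedes it below -/
import Mathlib

section
/- Let n ≥ 2 and let P(z) = ∏_{k=1}^{n}(z - z_k) be a monic polynomial whose zeros all lie in the closed unit disk |z| ≤ 1. If a zero z_j satisfies |z_j| ≤ n^{1/(n-1)} - 1, then there exists w ∈ ℂ with P'(w) = 0 and |w - z_j| ≤ 1. -/
/-!
Over an algebraically closed field, `‖p(x)‖ = ‖lc p‖ · ∏ ‖x - w‖` over the roots `w` of `p`.
Applied to `p = P'`, whose leading coefficient is `n`, at `x = z j`: since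
`P'(z j) = ∏_{k ≠ j} (z j - z k)` and `‖z j - z k‖ ≤ 1 + ‖z j‖ ≤ n^{1/(n-1)}`, we get
`‖P'(z j)‖ ≤ n`, so the product of the distances from `z j` to the `n - 1` critical points is
at most `1`, and one of them is at most `1`.
-/

open Polynomial

theorem Polynomial.norm_eval_eq_norm_leadingCoeff_mul_prod_roots
    {K : Type*} [NormedField K] [IsAlgClosed K] (p : K[X]) (x : K) :
    ‖p.eval x‖ = ‖p.leadingCoeff‖ * (p.roots.map (‖x - ·‖)).prod := by
  rw [(IsAlgClosed.splits p).eval_eq_prod_roots, norm_mul, ← normHom_apply (Multiset.prod _),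
    map_multiset_prod, Multiset.map_map]
  rfl

theorem Polynomial.exists_isRoot_norm_sub_le_one_of_norm_eval_le
    {K : Type*} [NormedField K] [IsAlgClosed K] {p : K[X]} (hp : p.natDegree ≠ 0) {x : K}
    (hx : ‖p.eval x‖ ≤ ‖p.leadingCoeff‖) : ∃ w, p.IsRoot w ∧ ‖w - x‖ ≤ 1 := by
  by_contra! hfar
  have hp0 : p ≠ 0 := by rintro rfl; simp at hp
  have hroots : p.roots ≠ 0 := by
    rwa [ne_eq, ← Multiset.card_eq_zero, ← (IsAlgClosed.splits p).natDegree_eq_card_roots]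
  have hprod : 1 < (p.roots.map (‖x - ·‖)).prod := by
    simpa using Multiset.prod_map_lt_prod_map hroots (fun _ ↦ (1 : ℝ)) (‖x - ·‖)
      (fun _ _ ↦ one_pos) fun r hr ↦ norm_sub_rev r x ▸ hfar r ((mem_roots hp0).1 hr)
  have hlc : 0 < ‖p.leadingCoeff‖ := norm_pos_iff.2 (leadingCoeff_ne_zero.2 hp0)
  rw [norm_eval_eq_norm_leadingCoeff_mul_prod_roots] at hx
  nlinarith

theorem Polynomial.norm_eval_derivative_multiset_prod_X_sub_C_le
    {K : Type*} [NormedField K] [DecidableEq K] {s : Multiset K} {x : K} (hx : x ∈ s) {R : ℝ}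
    (hR : ∀ a ∈ s, ‖x - a‖ ≤ R) :
    ‖(derivative (s.map (X - C ·)).prod).eval x‖ ≤ R ^ (Multiset.card s - 1) := by
  rw [eval_multiset_prod_X_sub_C_derivative hx, ← normHom_apply, map_multiset_prod,
    Multiset.map_map]
  refine (Multiset.prod_map_le_prod_map₀ _ (fun _ ↦ R) (fun _ _ ↦ norm_nonneg _)
    fun a ha ↦ hR a (Multiset.mem_of_mem_erase ha)).trans_eq ?_
  rw [Multiset.map_const', Multiset.prod_replicate, Multiset.card_erase_of_mem hx,
    Nat.pred_eq_sub_one]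

theorem Real.rpow_one_div_natCast_sub_one_pow {x : ℝ} (hx : 0 ≤ x) {n : ℕ} (hn : 1 < n) :
    (x ^ (1 / ((n : ℝ) - 1))) ^ (n - 1) = x := by
  rw [one_div, ← Nat.cast_pred (by omega), Real.rpow_inv_natCast_pow hx (by omega)]

/-- Lemma 1: the Sendov conjecture holds with respect to any root `z j`
with `|z j| ≤ n^{1/(n-1)} - 1`. -/
theorem stmt_2 (n : ℕ) (hn : 2 ≤ n) (z : Fin n → ℂ)
    (hdisk : ∀ k, ‖z k‖ ≤ 1)
    (P : ℂ[X]) (hP : P = ∏ k : Fin n, (X - C (z k)))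
    (j : Fin n) (hj : ‖z j‖ ≤ (n : ℝ) ^ ((1 : ℝ) / ((n : ℝ) - 1)) - 1) :
    ∃ w : ℂ, (Polynomial.derivative P).eval w = 0 ∧ ‖w - z j‖ ≤ 1 := by
  set s : Multiset ℂ := Finset.univ.val.map z
  have hPs : P = (s.map (X - C ·)).prod := by rw [hP, Multiset.map_map]; rfl
  have hs : Multiset.card s = n := by simp [s]
  have hPmonic : P.Monic := hPs ▸ monic_multiset_prod_of_monic _ _ fun a _ ↦ monic_X_sub_C a
  have hPdeg : P.natDegree = n := by rw [hPs, natDegree_multiset_prod_X_sub_C_eq_card, hs]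
  have hbound : ‖(derivative P).eval (z j)‖ ≤ ‖(derivative P).leadingCoeff‖ := by
    rw [leadingCoeff_derivative, hPmonic.leadingCoeff, hPdeg, one_mul, Complex.norm_natCast]
    have hdist : ∀ a ∈ s, ‖z j - a‖ ≤ (n : ℝ) ^ (1 / ((n : ℝ) - 1)) := by
      intro a ha
      obtain ⟨k, -, rfl⟩ := Multiset.mem_map.1 ha
      linarith [norm_sub_le (z j) (z k), hdisk k]
    have hP' := norm_eval_derivative_multiset_prod_X_sub_C_le
      (Multiset.mem_map_of_mem z (Finset.mem_univ j)) hdist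
    rwa [← hPs, hs, Real.rpow_one_div_natCast_sub_one_pow n.cast_nonneg hn] at hP'
  exact exists_isRoot_norm_sub_le_one_of_norm_eval_le
    (by rw [natDegree_derivative, hPdeg]; omega) hbound
end

section
/- Let 0 < a < 1 and 0 < s ≤ 1, and set Δ = (4 - a²)(4 - a² - s²)(a² + s²). Define v₃ = c + i d where c = (1/4)(a(6 - a² - s²) - √Δ) and d = (2 - s² - a c)/√(4 - a²). Then |v₃ - a| = 1; that is, v₃ lies on the circle of radius 1 centered at a and on the line L(z_0, s) = { c + i d : d√(4 - a²) = -a c + 2 - s² }. -/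
open Complex

/-!
Eliminating `d` through the line equation, `|v₃ - a| = 1` becomes the quadratic
`4c² - 2a(6 - a² - s²)c + a²(4 - a²) + (2 - s²)² - (4 - a²) = 0` in `c`, whose discriminant
is `4Δ`; the given `c` is its smaller root.
-/

lemma discriminant_nonneg {a s : ℝ} (ha : 0 < a) (ha1 : a < 1) (hs : 0 < s) (hs1 : s ≤ 1) :
    0 ≤ (4 - a ^ 2) * (4 - a ^ 2 - s ^ 2) * (a ^ 2 + s ^ 2) := by
  have : a ^ 2 < 1 := by nlinarith
  have : s ^ 2 ≤ 1 := by nlinarith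
  have : 0 ≤ 4 - a ^ 2 - s ^ 2 := by linarith
  exact mul_nonneg (mul_nonneg (by linarith) this) (by positivity)

lemma circle_eq_of_smaller_root {a s c : ℝ}
    (hΔ : 0 ≤ (4 - a ^ 2) * (4 - a ^ 2 - s ^ 2) * (a ^ 2 + s ^ 2))
    (hc : c = (a * (6 - a ^ 2 - s ^ 2)
      - √((4 - a ^ 2) * (4 - a ^ 2 - s ^ 2) * (a ^ 2 + s ^ 2))) / 4) :
    (4 - a ^ 2) * (c - a) ^ 2 + (2 - s ^ 2 - a * c) ^ 2 = 4 - a ^ 2 := by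
  set Δ := (4 - a ^ 2) * (4 - a ^ 2 - s ^ 2) * (a ^ 2 + s ^ 2)
  have hdiscrim : discrim 4 (-2 * a * (6 - a ^ 2 - s ^ 2))
      (a ^ 2 * (4 - a ^ 2) + (2 - s ^ 2) ^ 2 - (4 - a ^ 2)) = (2 * √Δ) * (2 * √Δ) := by
    rw [discrim, mul_mul_mul_comm, Real.mul_self_sqrt hΔ]
    ring
  have hroot := (quadratic_eq_zero_iff (by norm_num) hdiscrim c).mpr (Or.inr (by rw [hc]; ring))
  linear_combination hroot

lemma sq_add_sq_div_sqrt_eq_one {D x e : ℝ} (hD : 0 < D) (h : D * x ^ 2 + e ^ 2 = D) :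
    x ^ 2 + (e / √D) ^ 2 = 1 := by
  rw [div_pow, Real.sq_sqrt hD.le]
  field_simp
  linarith

/-- Lemma 2 (formula for `v₃`): the point `v₃ = c + id` with
`c = (1/4)(a(6-a²-s²) - √Δ)`, `Δ = (4-a²)(4-a²-s²)(a²+s²)`, and
`d = (2-s²-ac)/√(4-a²)` lies on the circle `|z - a| = 1` and on the line
`L(z₀,s) : d√(4-a²) = -ac + 2 - s²`. -/
theorem stmt_4 (a s : ℝ) (ha : 0 < a) (ha1 : a < 1) (hs : 0 < s) (hs1 : s ≤ 1)
    (Δ : ℝ) (hΔ : Δ = (4 - a ^ 2) * (4 - a ^ 2 - s ^ 2) * (a ^ 2 + s ^ 2))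
    (c d : ℝ)
    (hc : c = (a * (6 - a ^ 2 - s ^ 2) - Real.sqrt Δ) / 4)
    (hd : d = (2 - s ^ 2 - a * c) / Real.sqrt (4 - a ^ 2))
    (v₃ : ℂ) (hv₃ : v₃ = (c : ℝ) + (d : ℝ) * I) :
    ‖v₃ - (a : ℝ)‖ = 1 ∧ d * Real.sqrt (4 - a ^ 2) = -(a * c) + 2 - s ^ 2 := by
  subst hΔ
  have hD : 0 < 4 - a ^ 2 := by nlinarith
  have hcircle := circle_eq_of_smaller_root (discriminant_nonneg ha ha1 hs hs1) hc
  constructor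
  · have hv₃a : v₃ - (a : ℝ) = ((c - a : ℝ) : ℂ) + (d : ℝ) * I := by
      rw [hv₃]; push_cast; ring
    rw [hv₃a, norm_add_mul_I, hd, sq_add_sq_div_sqrt_eq_one hD hcircle, Real.sqrt_one]
  · rw [hd, div_mul_cancel₀ _ (Real.sqrt_pos.mpr hD).ne']
    ring
end

section
/- For all real numbers a and s with 0 < a ≤ 1 and 0 < s ≤ 1, the inequality a/2 - (1/4)·( a(6 - a² - s²) - √((4 - a²)(4 - a² - s²)(a² + s²)) ) > s²/6 holds. -/
/-- Lemma 2 (final inequality): `a/2 - Re v₃(z₀,s) > s²/6`. -/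
theorem stmt_5 (a s : ℝ) (ha : 0 < a) (ha1 : a ≤ 1) (hs : 0 < s) (hs1 : s ≤ 1) :
    a / 2 - (a * (6 - a ^ 2 - s ^ 2) -
      Real.sqrt ((4 - a ^ 2) * (4 - a ^ 2 - s ^ 2) * (a ^ 2 + s ^ 2))) / 4 > s ^ 2 / 6 := by
  have hc : (0:ℝ) ≤ 2 * s ^ 2 / 3 + a * (4 - a ^ 2 - s ^ 2) := by
    nlinarith [mul_nonneg ha.le (show (0:ℝ) ≤ 4 - a ^ 2 - s ^ 2 by nlinarith)]
  have hkey : 2 * s ^ 2 / 3 + a * (4 - a ^ 2 - s ^ 2) <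
      Real.sqrt ((4 - a ^ 2) * (4 - a ^ 2 - s ^ 2) * (a ^ 2 + s ^ 2)) := by
    rw [show 2 * s ^ 2 / 3 + a * (4 - a ^ 2 - s ^ 2)
        = Real.sqrt ((2 * s ^ 2 / 3 + a * (4 - a ^ 2 - s ^ 2)) ^ 2) by rw [Real.sqrt_sq hc]]
    apply Real.sqrt_lt_sqrt (by positivity)
    nlinarith [mul_pos (mul_pos hs hs)
      (show (0:ℝ) < (4 - a ^ 2 - s ^ 2) * (4 - 4 * a / 3) - 4 * s ^ 2 / 9 by nlinarith)]
  linarith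
end

section
/- Let n ≥ 2 and let P(z) = ∏_{j=1}^{n}(z - z_j) be a monic polynomial whose zeros z_1, …, z_n are pairwise distinct and all lie in the closed unit disk |z| ≤ 1, with z_n = a where 0 < a < 1. Set r = (1/n)·min_{i ≠ j} |z_i - z_j|. Then P' has no zero in the set A = { z ∈ ℂ : |z| ≤ 1 and a·Re z + √(4 - a²)·Im z ≥ 2 - r²/4 }. -/
/-!
A zero of `P` is simple, so it is not a critical point. At a critical point `w` that is not a
zero, `∑ⱼ 1/(w - zⱼ) = 0`; the term of the nearest zero must be cancelled by the `n - 1` others,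
which forces `w` to be at distance at least `min |zᵢ - zⱼ| / n = r` from every zero.
A point `w ∈ A` is within `r/2` of the unit vector `z₀`, so every zero `z` of the disk lies
outside the disk `|z - z₀| < r/2`, and this places it in the half-plane `Re (z̄₀ (w - z)) ≥ 0`,
strictly so for `z = a`. Then `Re (z₀ ∑ⱼ 1/(w - zⱼ)) > 0`, a contradiction.
-/

open Polynomial Finset
open scoped ComplexConjugate InnerProductSpace

namespace Lagrange

variable {K ι : Type*} [Field K] {s : Finset ι} {v : ι → K} {x : K}

theorem eval_derivative_nodal_eq_mul_sum_inv (hx : ∀ i ∈ s, x ≠ v i) :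
    (derivative (nodal s v)).eval x = (nodal s v).eval x * ∑ i ∈ s, (x - v i)⁻¹ := by
  classical
  rw [derivative_nodal, eval_finsetSum, mul_sum]
  refine sum_congr rfl fun i hi => ?_
  rw [eval_nodal, eval_nodal, ← mul_prod_erase s _ hi, mul_comm (x - v i), mul_assoc,
    mul_inv_cancel₀ (sub_ne_zero.mpr (hx i hi)), mul_one]

theorem sum_inv_sub_eq_zero_of_eval_derivative_nodal_eq_zero (hx : ∀ i ∈ s, x ≠ v i)
    (h : (derivative (nodal s v)).eval x = 0) : ∑ i ∈ s, (x - v i)⁻¹ = 0 := by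
  rw [eval_derivative_nodal_eq_mul_sum_inv hx, mul_eq_zero] at h
  exact h.resolve_left (eval_nodal_not_at_node hx)

theorem eval_derivative_nodal_at_node_ne_zero [DecidableEq ι] (hvs : Set.InjOn v s) {i : ι}
    (hi : i ∈ s) : (derivative (nodal s v)).eval (v i) ≠ 0 := fun h =>
  nodalWeight_ne_zero hvs hi (by rw [nodalWeight_eq_eval_derivative_nodal hi, h, inv_zero])

end Lagrange

theorem Complex.inner_conj_inv (u y : ℂ) : ⟪conj u, y⁻¹⟫_ℝ = ⟪u, y⟫_ℝ / ‖y‖ ^ 2 := by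
  simp only [Complex.inner, Complex.sq_norm, Complex.mul_re, Complex.inv_re, Complex.inv_im,
    Complex.conj_re, Complex.conj_im, conj_conj]
  ring

theorem Complex.sum_inv_ne_zero_of_inner_nonneg {ι : Type*} {s : Finset ι} (u : ℂ) {y : ι → ℂ}
    (hy : ∀ i ∈ s, 0 ≤ ⟪u, y i⟫_ℝ) {i₀ : ι} (hi₀ : i₀ ∈ s) (hpos : 0 < ⟪u, y i₀⟫_ℝ) :
    ∑ i ∈ s, (y i)⁻¹ ≠ 0 := by
  have hy₀ : y i₀ ≠ 0 := by
    rintro h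
    simp [h] at hpos
  suffices 0 < ⟪conj u, ∑ i ∈ s, (y i)⁻¹⟫_ℝ by
    rintro h
    simp [h] at this
  rw [inner_sum]
  simp_rw [Complex.inner_conj_inv]
  exact sum_pos' (fun i hi => div_nonneg (hy i hi) (sq_nonneg _))
    ⟨i₀, hi₀, div_pos hpos (by positivity)⟩

theorem Complex.le_card_mul_norm_sub_of_sum_inv_eq_zero {ι : Type*} [Fintype ι] [DecidableEq ι]
    {v : ι → ℂ} {D : ℝ} (hD : ∀ i j, i ≠ j → D ≤ ‖v i - v j‖) {x : ℂ}
    (hx : ∀ i, x ≠ v i) (hsum : ∑ i, (x - v i)⁻¹ = 0) (j : ι) :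
    D ≤ Fintype.card ι * ‖x - v j‖ := by
  set t := ‖x - v j‖
  set m : ℝ := ((univ.erase j).card : ℝ)
  have hcard : (Fintype.card ι : ℝ) = m + 1 := by
    rw [← card_univ, ← card_erase_add_one (mem_univ j)]; push_cast; rfl
  have ht : 0 < t := norm_pos_iff.mpr (sub_ne_zero.mpr (hx j))
  by_contra! hlt
  have hgap : 0 < D - t := by nlinarith [(Nat.cast_nonneg _ : (0 : ℝ) ≤ m)]
  have hfar : ∀ k ∈ univ.erase j, ‖(x - v k)⁻¹‖ ≤ (D - t)⁻¹ := by
    intro k hk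
    have h₁ := hD k j (ne_of_mem_erase hk)
    have h₂ : ‖v k - v j‖ ≤ ‖x - v k‖ + t := by
      simpa [norm_sub_rev (v k) x] using norm_sub_le_norm_sub_add_norm_sub (v k) x (v j)
    rw [norm_inv]
    exact inv_anti₀ hgap (by linarith)
  -- the term of the nearest root must be cancelled by the `m` others, each of size `≤ (D - t)⁻¹`
  have hbound : t⁻¹ ≤ m / (D - t) := by
    have hsplit : (x - v j)⁻¹ = -∑ k ∈ univ.erase j, (x - v k)⁻¹ := by
      rw [eq_neg_iff_add_eq_zero, add_sum_erase univ (fun k => (x - v k)⁻¹) (mem_univ j), hsum]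
    calc t⁻¹ = ‖∑ k ∈ univ.erase j, (x - v k)⁻¹‖ := by rw [← norm_inv, hsplit, norm_neg]
      _ ≤ ∑ k ∈ univ.erase j, ‖(x - v k)⁻¹‖ := norm_sum_le _ _
      _ ≤ m * (D - t)⁻¹ := (sum_le_card_nsmul _ _ _ hfar).trans_eq (nsmul_eq_mul _ _)
      _ = m / (D - t) := (div_eq_mul_inv _ _).symm
  rw [inv_eq_one_div, div_le_div_iff₀ ht hgap] at hbound
  nlinarith

section InnerProductSpace

variable {E : Type*} [NormedAddCommGroup E] [InnerProductSpace ℝ E] {u w z : E} {ρ : ℝ}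

theorem norm_sub_le_of_one_sub_sq_div_two_le_inner (hu : ‖u‖ = 1) (hw : ‖w‖ ≤ 1) (hρ : 0 ≤ ρ)
    (h : 1 - ρ ^ 2 / 2 ≤ ⟪u, w⟫_ℝ) : ‖w - u‖ ≤ ρ := by
  have hsq : ‖w - u‖ ^ 2 ≤ ρ ^ 2 := by
    rw [norm_sub_sq_real, real_inner_comm, hu]
    nlinarith [norm_nonneg w]
  exact (pow_le_pow_iff_left₀ (norm_nonneg _) hρ two_ne_zero).mp hsq

theorem inner_le_one_sub_sq_div_two_of_le_norm_sub (hu : ‖u‖ = 1) (hz : ‖z‖ ≤ 1) (hρ : 0 ≤ ρ)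
    (h : ρ ≤ ‖u - z‖) : ⟪u, z⟫_ℝ ≤ 1 - ρ ^ 2 / 2 := by
  have hsq : ρ ^ 2 ≤ ‖u - z‖ ^ 2 := pow_le_pow_left₀ hρ h 2
  rw [norm_sub_sq_real, hu] at hsq
  nlinarith [norm_nonneg z]

theorem inner_sub_nonneg_of_two_mul_le_norm_sub (hu : ‖u‖ = 1) (hw : ‖w‖ ≤ 1) (hz : ‖z‖ ≤ 1)
    (hρ : 0 ≤ ρ) (hcap : 1 - ρ ^ 2 / 2 ≤ ⟪u, w⟫_ℝ) (hwz : 2 * ρ ≤ ‖w - z‖) :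
    0 ≤ ⟪u, w - z⟫_ℝ := by
  have hwu := norm_sub_le_of_one_sub_sq_div_two_le_inner hu hw hρ hcap
  have huz : ρ ≤ ‖u - z‖ := by
    linarith [norm_sub_le_norm_sub_add_norm_sub w u z]
  rw [inner_sub_right]
  linarith [inner_le_one_sub_sq_div_two_of_le_norm_sub hu hz hρ huz]

end InnerProductSpace

/-- Lemma 3 (claim): for a monic polynomial with pairwise distinct zeros in the closed
unit disk, one of which is `a ∈ (0,1)`, the derivative has no zero in
`A = { z : |z| ≤ 1 ∧ a·Re z + √(4-a²)·Im z ≥ 2 - r²/4 }`. -/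
theorem stmt_6 (n : ℕ) (hn : 2 ≤ n)
    (z : Fin n → ℂ) (hinj : Function.Injective z)
    (hdisk : ∀ j, ‖z j‖ ≤ 1)
    (a : ℝ) (ha : 0 < a) (ha1 : a < 1)
    (hza : z ⟨n - 1, by omega⟩ = (a : ℝ))
    (r : ℝ)
    (hr : IsLeast {d : ℝ | ∃ i j : Fin n, i ≠ j ∧ d = ‖z i - z j‖} ((n : ℝ) * r))
    (P : ℂ[X]) (hP : P = ∏ j : Fin n, (X - C (z j))) :
    ∀ w : ℂ, ‖w‖ ≤ 1 →
      a * w.re + Real.sqrt (4 - a ^ 2) * w.im ≥ 2 - r ^ 2 / 4 →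
      (Polynomial.derivative P).eval w ≠ 0 := by
  obtain ⟨⟨i₀, j₀, hij₀, hval⟩, hmin⟩ := hr
  have hsep : ∀ i j, i ≠ j → n * r ≤ ‖z i - z j‖ := fun i j h => hmin ⟨i, j, h, rfl⟩
  have hn' : (2 : ℝ) ≤ n := by exact_mod_cast hn
  have hr₀ : 0 < r := by
    have : 0 < ‖z i₀ - z j₀‖ := norm_pos_iff.mpr (sub_ne_zero.mpr (hinj.ne hij₀))
    nlinarith
  have hr₁ : r ≤ 1 := by
    nlinarith [norm_sub_le (z i₀) (z j₀), hdisk i₀, hdisk j₀]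
  -- `u` is the centre `z₀` of the paper
  set s := √(4 - a ^ 2)
  set u : ℂ := ⟨a / 2, s / 2⟩
  have hs : s ^ 2 = 4 - a ^ 2 := Real.sq_sqrt (by nlinarith)
  have hu : ‖u‖ = 1 := by
    refine (sq_eq_sq₀ (norm_nonneg _) zero_le_one).mp ?_
    rw [Complex.sq_norm, Complex.normSq_mk]
    nlinarith
  have hinner : ∀ x : ℂ, ⟪u, x⟫_ℝ = (a * x.re + s * x.im) / 2 := fun x => by
    simp only [Complex.inner, Complex.mul_re, Complex.conj_re, Complex.conj_im]
    ring
  intro w hw hA hcrit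
  have hcap : 1 - (r / 2) ^ 2 / 2 ≤ ⟪u, w⟫_ℝ := by rw [hinner]; linarith
  rw [hP, ← Lagrange.nodal_eq] at hcrit
  have hnode : ∀ j, w ≠ z j := by
    rintro j rfl
    exact Lagrange.eval_derivative_nodal_at_node_ne_zero hinj.injOn (mem_univ j) hcrit
  have hsum : ∑ j, (w - z j)⁻¹ = 0 :=
    Lagrange.sum_inv_sub_eq_zero_of_eval_derivative_nodal_eq_zero (fun j _ => hnode j) hcrit
  have hfar : ∀ j, r ≤ ‖w - z j‖ := fun j => by
    have := Complex.le_card_mul_norm_sub_of_sum_inv_eq_zero hsep hnode hsum j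
    rw [Fintype.card_fin] at this
    exact le_of_mul_le_mul_left this (by positivity)
  refine Complex.sum_inv_ne_zero_of_inner_nonneg u (fun j _ =>
    inner_sub_nonneg_of_two_mul_le_norm_sub hu hw (hdisk j) (by positivity) hcap
      (by linarith [hfar j])) (mem_univ ⟨n - 1, by omega⟩) ?_ hsum
  rw [hza, inner_sub_right, hinner, hinner]
  simp only [Complex.ofReal_re, Complex.ofReal_im]
  nlinarith
end

section
/- Let n = 2p + 1 with p ≥ 1 an integer, and for 1 ≤ j ≤ n - 1 set α_j = sin(2jπ/n)/(1 - cos(2jπ/n)). Then ∏_{j=1}^{p} α_j ≥ (√3/3)^p. -/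
open Real

private lemma cot_form (x : ℝ) (h1 : 0 < x) (h2 : x < π) :
    Real.sin (2 * x) / (1 - Real.cos (2 * x)) = Real.cos x / Real.sin x := by
  have hs : 0 < Real.sin x := Real.sin_pos_of_pos_of_lt_pi h1 h2
  have hp := Real.sin_sq_add_cos_sq x
  rw [Real.sin_two_mul, Real.cos_two_mul]
  have hd : 1 - (2 * Real.cos x ^ 2 - 1) = 2 * Real.sin x ^ 2 := by nlinarith
  rw [hd]
  field_simp

private lemma pair_bound (a b : ℝ) (ha : 0 < a) (hb : 0 < b)
    (ha2 : a < π / 2) (hb2 : b < π / 2)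
    (h : Real.cos (a - b) + 2 * Real.cos (a + b) ≥ 0) :
    Real.cos a / Real.sin a * (Real.cos b / Real.sin b) ≥ 1 / 3 := by
  have hπ := Real.pi_pos
  have hsa : 0 < Real.sin a := Real.sin_pos_of_pos_of_lt_pi ha (by linarith)
  have hsb : 0 < Real.sin b := Real.sin_pos_of_pos_of_lt_pi hb (by linarith)
  rw [Real.cos_sub, Real.cos_add] at h
  rw [ge_iff_le, div_mul_div_comm, le_div_iff₀ (by positivity)]
  nlinarith

set_option maxHeartbeats 1000000 in
private lemma key_angle (p : ℕ) (hp : 1 ≤ p) (n : ℕ) (hn : n = 2 * p + 1)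
    (j : ℕ) (hj1 : 1 ≤ j) (hj2 : j ≤ p) :
    Real.cos ((j : ℝ) * π / n - ((p : ℝ) + 1 - j) * π / n)
      + 2 * Real.cos ((j : ℝ) * π / n + ((p : ℝ) + 1 - j) * π / n) ≥ 0 := by
  have hπ := Real.pi_pos
  have hN : (n : ℝ) = 2 * p + 1 := by rw [hn]; push_cast; ring
  have hp1 : (1 : ℝ) ≤ (p : ℝ) := by exact_mod_cast hp
  have hN3 : (3 : ℝ) ≤ (n : ℝ) := by rw [hN]; linarith
  have hNpos : (0 : ℝ) < n := by linarith
  set t : ℝ := π / (2 * n) with ht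
  have htpos : 0 < t := by positivity
  have ht6 : t ≤ π / 6 := by
    rw [ht, div_le_div_iff₀ (by positivity) (by norm_num)]
    nlinarith
  -- sum of angles
  have hab : (j : ℝ) * π / n + ((p : ℝ) + 1 - j) * π / n = π / 2 + t := by
    rw [ht, hN]; field_simp; ring
  have hcos_sum : Real.cos ((j : ℝ) * π / n + ((p : ℝ) + 1 - j) * π / n) = -Real.sin t := by
    rw [hab]
    have : π / 2 + t = π / 2 - (-t) := by ring
    rw [this, Real.cos_pi_div_two_sub, Real.sin_neg]
  -- difference of angles
  have hj1' : (1 : ℝ) ≤ (j : ℝ) := by exact_mod_cast hj1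
  have hj2' : (j : ℝ) ≤ (p : ℝ) := by exact_mod_cast hj2
  have hdiffval : (j : ℝ) * π / n - ((p : ℝ) + 1 - j) * π / n
      = (2 * j - p - 1) * (π / n) := by ring
  have habs : |(j : ℝ) * π / n - ((p : ℝ) + 1 - j) * π / n| ≤ π / 2 - 3 * t := by
    have h1 : ((p : ℝ) - 1) * (π / n) = π / 2 - 3 * t := by
      rw [ht, hN]; field_simp; ring
    rw [hdiffval, ← h1, abs_le]
    have hπn : 0 < π / n := by positivity
    constructor <;> nlinarith
  have hbound : Real.cos (π / 2 - 3 * t)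
      ≤ Real.cos ((j : ℝ) * π / n - ((p : ℝ) + 1 - j) * π / n) := by
    rw [← Real.cos_abs ((j : ℝ) * π / n - ((p : ℝ) + 1 - j) * π / n)]
    apply Real.cos_le_cos_of_nonneg_of_le_pi (abs_nonneg _) _ habs
    nlinarith
  rw [Real.cos_pi_div_two_sub] at hbound
  -- final: sin (3t) ≥ 2 sin t
  have hsint : 0 ≤ Real.sin t := Real.sin_nonneg_of_nonneg_of_le_pi htpos.le (by nlinarith)
  have hsint2 : Real.sin t ≤ 1 / 2 := by
    rw [← Real.sin_pi_div_six]
    exact Real.strictMonoOn_sin.monotoneOn ⟨by linarith, by linarith⟩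
      ⟨by linarith, by linarith⟩ ht6
  have h3t : Real.sin (3 * t) = 3 * Real.sin t - 4 * Real.sin t ^ 3 := Real.sin_three_mul t
  rw [hcos_sum]
  have h4 : 4 * Real.sin t ^ 3 ≤ Real.sin t := by
    have hmul : Real.sin t * Real.sin t ≤ (1/2) * (1/2) :=
      mul_le_mul hsint2 hsint2 hsint (by norm_num)
    have h2 : Real.sin t * (Real.sin t * Real.sin t) ≤ Real.sin t * (1/4) :=
      mul_le_mul_of_nonneg_left (by linarith) hsint
    nlinarith [h2]
  linarith

/-- Lemma 4 (odd case): for `n = 2p+1`, `α₁ ⋯ α_p ≥ (√3/3)^p` where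
`α_j = sin(2jπ/n)/(1 - cos(2jπ/n))`. -/
theorem stmt_8 (p : ℕ) (hp : 1 ≤ p) (n : ℕ) (hn : n = 2 * p + 1) :
    ∏ j ∈ Finset.Icc 1 p,
      Real.sin (2 * j * Real.pi / n) / (1 - Real.cos (2 * j * Real.pi / n))
      ≥ (Real.sqrt 3 / 3) ^ p := by
  have hπ := Real.pi_pos
  have hN : (n : ℝ) = 2 * p + 1 := by rw [hn]; push_cast; ring
  have hp1 : (1 : ℝ) ≤ (p : ℝ) := by exact_mod_cast hp
  have hN3 : (3 : ℝ) ≤ (n : ℝ) := by rw [hN]; linarith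
  have hNpos : (0 : ℝ) < n := by linarith
  -- angle bounds
  have hang : ∀ j : ℕ, 1 ≤ j → j ≤ p →
      0 < (j : ℝ) * π / n ∧ (j : ℝ) * π / n < π / 2 := by
    intro j h1 h2
    have hj1 : (1 : ℝ) ≤ (j : ℝ) := by exact_mod_cast h1
    have hj2 : (j : ℝ) ≤ (p : ℝ) := by exact_mod_cast h2
    constructor
    · apply div_pos (by nlinarith) hNpos
    · rw [div_lt_iff₀ hNpos, hN]; nlinarith
  -- rewrite each factor to cot form
  have hterm : ∀ j ∈ Finset.Icc 1 p,
      Real.sin (2 * j * π / n) / (1 - Real.cos (2 * j * π / n))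
        = Real.cos ((j : ℝ) * π / n) / Real.sin ((j : ℝ) * π / n) := by
    intro j hj
    obtain ⟨hj1, hj2⟩ := Finset.mem_Icc.mp hj
    obtain ⟨h1, h2⟩ := hang j hj1 hj2
    have h2x : 2 * (j : ℝ) * π / n = 2 * ((j : ℝ) * π / n) := by ring
    rw [h2x, cot_form _ h1 (by linarith)]
  rw [Finset.prod_congr rfl hterm]
  set g : ℕ → ℝ := fun j => Real.cos ((j : ℝ) * π / n) / Real.sin ((j : ℝ) * π / n) with hg
  have hgpos : ∀ j ∈ Finset.Icc 1 p, 0 < g j := by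
    intro j hj
    obtain ⟨hj1, hj2⟩ := Finset.mem_Icc.mp hj
    obtain ⟨h1, h2⟩ := hang j hj1 hj2
    have hc : 0 < Real.cos ((j : ℝ) * π / n) :=
      Real.cos_pos_of_mem_Ioo ⟨by linarith, h2⟩
    have hs : 0 < Real.sin ((j : ℝ) * π / n) :=
      Real.sin_pos_of_pos_of_lt_pi h1 (by linarith)
    positivity
  set P : ℝ := ∏ j ∈ Finset.Icc 1 p, g j with hP
  have hPpos : 0 < P := Finset.prod_pos hgpos
  -- reflection
  have hrefl : P = ∏ j ∈ Finset.Icc 1 p, g (p + 1 - j) := by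
    rw [hP]
    exact Finset.prod_nbij' (fun j => p + 1 - j) (fun j => p + 1 - j)
      (fun a ha => by simp only [Finset.mem_Icc] at *; omega)
      (fun a ha => by simp only [Finset.mem_Icc] at *; omega)
      (fun a ha => by simp only [Finset.mem_Icc] at ha; show p + 1 - (p + 1 - a) = a; omega)
      (fun a ha => by simp only [Finset.mem_Icc] at ha; show p + 1 - (p + 1 - a) = a; omega)
      (fun a ha => by
        simp only [Finset.mem_Icc] at ha
        have h : p + 1 - (p + 1 - a) = a := by omega
        show g a = g (p + 1 - (p + 1 - a))
        rw [h])
  -- pairwise bound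
  have hpair : ∀ j ∈ Finset.Icc 1 p, (1 / 3 : ℝ) ≤ g j * g (p + 1 - j) := by
    intro j hj
    obtain ⟨hj1, hj2⟩ := Finset.mem_Icc.mp hj
    obtain ⟨h1, h2⟩ := hang j hj1 hj2
    obtain ⟨h1', h2'⟩ := hang (p + 1 - j) (by omega) (by omega)
    have hcast : ((p + 1 - j : ℕ) : ℝ) = (p : ℝ) + 1 - j := by
      rw [Nat.cast_sub (by omega)]; push_cast; ring
    rw [hcast] at h1' h2'
    have hk := key_angle p hp n hn j hj1 hj2
    have := pair_bound ((j : ℝ) * π / n) (((p : ℝ) + 1 - j) * π / n)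
      h1 h1' h2 h2' hk
    simp only [hg]
    rw [hcast]
    exact this
  have hsq : (1 / 3 : ℝ) ^ p ≤ P ^ 2 := by
    have hcard : (Finset.Icc 1 p).card = p := by
      rw [Nat.card_Icc]; omega
    calc (1 / 3 : ℝ) ^ p = ∏ _j ∈ Finset.Icc 1 p, (1 / 3 : ℝ) := by
          rw [Finset.prod_const, hcard]
      _ ≤ ∏ j ∈ Finset.Icc 1 p, (g j * g (p + 1 - j)) :=
          Finset.prod_le_prod (fun j _ => by norm_num) hpair
      _ = P * P := by
          rw [Finset.prod_mul_distrib, ← hP, ← hrefl]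
      _ = P ^ 2 := by ring
  -- conclude
  have hq : (Real.sqrt 3 / 3) ^ p ≥ 0 := by positivity
  have hqsq : ((Real.sqrt 3 / 3) ^ p) ^ 2 = (1 / 3 : ℝ) ^ p := by
    rw [← pow_mul, mul_comm, pow_mul]
    congr 1
    rw [div_pow, Real.sq_sqrt (by norm_num : (3:ℝ) ≥ 0)]
    norm_num
  have : ((Real.sqrt 3 / 3) ^ p) ^ 2 ≤ P ^ 2 := by rw [hqsq]; exact hsq
  nlinarith [sq_nonneg (P - (Real.sqrt 3 / 3) ^ p), sq_nonneg (P + (Real.sqrt 3 / 3) ^ p)]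
end

section
/- Let n = 2p + 1 with p ≥ 2 an integer, and for 1 ≤ j ≤ n - 1 set α_j = sin(2jπ/n)/(1 - cos(2jπ/n)). Then for every integer j with 1 ≤ j ≤ p/2 one has α_j · α_{p-j+1} ≥ 1/3. -/
open Real

set_option maxHeartbeats 1000000 in
/-- Lemma 4 (odd case, key inequality): for `n = 2p+1` with `p ≥ 2` and
`1 ≤ j ≤ ⌊p/2⌋`, one has `α_j · α_{p-j+1} ≥ 1/3`. -/
theorem stmt_10 (p : ℕ) (hp : 2 ≤ p) (n : ℕ) (hn : n = 2 * p + 1)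
    (α : ℕ → ℝ)
    (hα : ∀ j, 1 ≤ j → j ≤ n - 1 →
      α j = Real.sin (2 * j * Real.pi / n) / (1 - Real.cos (2 * j * Real.pi / n)))
    (j : ℕ) (hj1 : 1 ≤ j) (hjp : j ≤ p / 2) :
    α j * α (p - j + 1) ≥ 1 / 3 := by
  have hjp' : 2 * j ≤ p := by omega
  have hπ := Real.pi_pos
  have hNval : (n : ℝ) = 2 * (p : ℝ) + 1 := by rw [hn]; push_cast; ring
  have hp2 : (2 : ℝ) ≤ (p : ℝ) := by exact_mod_cast hp
  have hj1' : (1 : ℝ) ≤ (j : ℝ) := by exact_mod_cast hj1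
  have h2j : 2 * (j : ℝ) ≤ (p : ℝ) := by exact_mod_cast hjp'
  have hNpos : (0 : ℝ) < (n : ℝ) := by nlinarith
  have hN5 : (5 : ℝ) ≤ (n : ℝ) := by nlinarith
  set t : ℝ := Real.pi / (2 * (n : ℝ)) with ht
  set x : ℝ := (j : ℝ) * Real.pi / (n : ℝ) with hxdef
  set y : ℝ := ((p : ℝ) - (j : ℝ) + 1) * Real.pi / (n : ℝ) with hydef
  -- half-angle rewriting
  have half : ∀ z : ℝ, Real.sin z ≠ 0 →
      Real.sin (2 * z) / (1 - Real.cos (2 * z)) = Real.cos z / Real.sin z := by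
    intro z hz
    have h1 := Real.sin_two_mul z
    have h2 := Real.cos_two_mul z
    have h3 := Real.sin_sq_add_cos_sq z
    rw [h1, h2, show 1 - (2 * Real.cos z ^ 2 - 1) = 2 * Real.sin z ^ 2 by nlinarith]
    rw [div_eq_div_iff (by positivity) hz]
    ring
  -- positivity of sin x, sin y
  have hxpos : 0 < x := by positivity
  have hxlt : x < Real.pi := by
    rw [hxdef, div_lt_iff₀ hNpos]
    nlinarith
  have hsinx : 0 < Real.sin x := Real.sin_pos_of_pos_of_lt_pi hxpos hxlt
  have hypos : 0 < y := by
    rw [hydef]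
    have : (0:ℝ) < ((p : ℝ) - (j : ℝ) + 1) := by nlinarith
    positivity
  have hylt : y < Real.pi := by
    rw [hydef, div_lt_iff₀ hNpos]
    nlinarith
  have hsiny : 0 < Real.sin y := Real.sin_pos_of_pos_of_lt_pi hypos hylt
  -- rewrite α values
  have hαj : α j = Real.cos x / Real.sin x := by
    rw [hα j hj1 (by omega)]
    rw [show 2 * (j : ℝ) * Real.pi / (n : ℝ) = 2 * x by rw [hxdef]; ring]
    exact half x (ne_of_gt hsinx)
  have hcast : ((p - j + 1 : ℕ) : ℝ) = (p : ℝ) - (j : ℝ) + 1 := by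
    have : j ≤ p := by omega
    push_cast [this]; ring
  have hαy : α (p - j + 1) = Real.cos y / Real.sin y := by
    rw [hα (p - j + 1) (by omega) (by omega)]
    rw [show 2 * ((p - j + 1 : ℕ) : ℝ) * Real.pi / (n : ℝ) = 2 * y by
      rw [hydef, hcast]; ring]
    exact half y (ne_of_gt hsiny)
  rw [hαj, hαy, div_mul_div_comm, ge_iff_le, le_div_iff₀ (by positivity)]
  -- key angle identities
  have hd : (2 * (p : ℝ) + 1) ≠ 0 := by positivity
  have hxy : x + y = Real.pi / 2 + t := by
    rw [hxdef, hydef, ht, hNval]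
    field_simp
    ring
  have hxmy : x - y = (4 * (j : ℝ) - 1) * t - Real.pi / 2 := by
    rw [hxdef, hydef, ht, hNval]
    field_simp
    ring
  have hcxy : Real.cos (x + y) = - Real.sin t := by
    rw [hxy, Real.cos_add, Real.cos_pi_div_two, Real.sin_pi_div_two]; ring
  have hcxmy : Real.cos (x - y) = Real.sin ((4 * (j : ℝ) - 1) * t) := by
    rw [hxmy, Real.cos_sub, Real.cos_pi_div_two, Real.sin_pi_div_two]; ring
  -- key inequality : sin ((4j-1) t) ≥ 2 sin t
  have htpos : 0 < t := by positivity
  have ht10 : t ≤ Real.pi / 10 := by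
    rw [ht, div_le_div_iff₀ (by positivity) (by norm_num)]
    nlinarith
  have h4j : (4 * (j : ℝ) - 1) * t ≤ Real.pi / 2 := by
    rw [ht, show (4 * (j:ℝ) - 1) * (Real.pi / (2 * (n:ℝ))) =
      ((4 * (j:ℝ) - 1) * Real.pi) / (2 * (n:ℝ)) by ring,
      div_le_div_iff₀ (by positivity) (by norm_num)]
    nlinarith
  have h3t : 3 * t ≤ (4 * (j : ℝ) - 1) * t := by nlinarith
  have hmono : Real.sin (3 * t) ≤ Real.sin ((4 * (j : ℝ) - 1) * t) := by
    apply Real.strictMonoOn_sin.monotoneOn _ _ h3t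
    · constructor
      · nlinarith
      · linarith
    · constructor
      · nlinarith
      · linarith
  have hsint : Real.sin t ≤ 1 / 2 := by
    have h1 : Real.sin t ≤ t := Real.sin_le htpos.le
    have h2 : Real.pi ≤ 4 := Real.pi_le_four
    nlinarith
  have hsint0 : 0 ≤ Real.sin t := Real.sin_nonneg_of_nonneg_of_le_pi htpos.le
    (by nlinarith)
  have h3m : Real.sin (3 * t) ≥ 2 * Real.sin t := by
    rw [Real.sin_three_mul]
    nlinarith [mul_nonneg (mul_nonneg hsint0
      (by linarith : (0:ℝ) ≤ 1 - 2 * Real.sin t))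
      (by linarith : (0:ℝ) ≤ 1 + 2 * Real.sin t)]
  have hkey : Real.sin ((4 * (j : ℝ) - 1) * t) ≥ 2 * Real.sin t := by linarith
  -- combine
  have e1 := Real.cos_sub x y
  have e2 := Real.cos_add x y
  rw [hcxmy] at e1
  rw [hcxy] at e2
  linarith
end

section
/- Let n = 2p with p ≥ 2 an integer, let a_n = n^{1/(n-1)} - 1, let α_{p-1} = sin(2(p-1)π/n)/(1 - cos(2(p-1)π/n)), and let r be a real number with 0 < r ≤ 2/n. Then r²/24 < (a_{2p}/2)·α_{p-1}. -/
open Real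

/-- Lemma 5 part 1 (even case): for `n = 2p` with `p ≥ 2` and `0 < r ≤ 2/n`,
`r²/24 < (a_{2p}/2)·α_{p-1}`. -/
theorem stmt_11 (p : ℕ) (hp : 2 ≤ p) (n : ℕ) (hn : n = 2 * p)
    (an : ℝ) (han : an = (n : ℝ) ^ ((1 : ℝ) / ((n : ℝ) - 1)) - 1)
    (α : ℝ) (hα : α = Real.sin (2 * (p - 1 : ℕ) * Real.pi / n) /
      (1 - Real.cos (2 * (p - 1 : ℕ) * Real.pi / n)))
    (r : ℝ) (hr0 : 0 < r) (hr : r ≤ 2 / n) :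
    r ^ 2 / 24 < (an / 2) * α := by
  have hp2 : (2 : ℝ) ≤ (p : ℝ) := by exact_mod_cast hp
  have hpcast : ((p - 1 : ℕ) : ℝ) = (p : ℝ) - 1 :=
    by push_cast [Nat.cast_sub (by omega : 1 ≤ p)]; ring
  have hppos : (0 : ℝ) < p := by linarith
  have hn4 : (4 : ℝ) ≤ (n : ℝ) := by
    have : (4 : ℕ) ≤ n := by omega
    exact_mod_cast this
  have hnpos : (0 : ℝ) < n := by linarith
  have hncast : (n : ℝ) = 2 * p := by exact_mod_cast hn
  -- angle rewrite
  have hang : 2 * ((p - 1 : ℕ) : ℝ) * Real.pi / n = Real.pi - Real.pi / p := by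
    rw [hpcast, hncast]
    field_simp
  have hα' : α = Real.sin (Real.pi / p) / (1 + Real.cos (Real.pi / p)) := by
    rw [hα, hang, Real.sin_pi_sub, Real.cos_pi_sub]
    ring_nf
  -- bound α from below
  have hxpos : 0 < Real.pi / p := by positivity
  have hxle : Real.pi / p ≤ Real.pi / 2 := by
    apply div_le_div_of_nonneg_left Real.pi_pos.le (by norm_num) hp2
  have hsin : 2 / p ≤ Real.sin (Real.pi / p) := by
    have := Real.mul_le_sin hxpos.le hxle
    have hne : Real.pi ≠ 0 := Real.pi_ne_zero
    calc 2 / p = 2 / Real.pi * (Real.pi / p) := by field_simp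
      _ ≤ Real.sin (Real.pi / p) := this
  have hcos1 : Real.cos (Real.pi / p) ≤ 1 := Real.cos_le_one _
  have hcospos : 0 ≤ Real.cos (Real.pi / p) := by
    apply Real.cos_nonneg_of_mem_Icc
    constructor <;> [linarith; exact hxle]
  have hden : 0 < 1 + Real.cos (Real.pi / p) := by linarith
  have hαge : 1 / (p : ℝ) ≤ α := by
    rw [hα']
    rw [div_le_div_iff₀ hppos hden]
    have h2 : 2 ≤ Real.sin (Real.pi / p) * p := by
      rw [div_le_iff₀ hppos] at hsin; linarith
    linarith
  -- bound an from below
  have hn1 : (1 : ℝ) < (n : ℝ) - 1 := by linarith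
  have hlog : 1 < Real.log n := by
    rw [Real.lt_log_iff_exp_lt (by linarith)]
    calc Real.exp 1 < 2.7182818286 := Real.exp_one_lt_d9
      _ ≤ (n : ℝ) := by linarith
  have hrpow : (n : ℝ) ^ ((1 : ℝ) / ((n : ℝ) - 1)) =
      Real.exp (1 / ((n : ℝ) - 1) * Real.log n) := by
    rw [Real.rpow_def_of_pos hnpos]; ring_nf
  have hanlb : 1 / ((n : ℝ) - 1) < an := by
    rw [han, hrpow]
    have h1 : 1 / ((n : ℝ) - 1) * Real.log n + 1 ≤
        Real.exp (1 / ((n : ℝ) - 1) * Real.log n) := Real.add_one_le_exp _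
    have h2 : 1 / ((n : ℝ) - 1) < 1 / ((n : ℝ) - 1) * Real.log n := by
      have hpos : 0 < 1 / ((n : ℝ) - 1) := by positivity
      nlinarith
    linarith
  have han12p : 1 / (12 * (p : ℝ)) < an := by
    have : 1 / (12 * (p : ℝ)) < 1 / ((n : ℝ) - 1) := by
      rw [div_lt_div_iff₀ (by positivity) (by linarith)]
      rw [hncast]; nlinarith
    linarith
  have hanpos : 0 < an := lt_trans (by positivity) han12p
  -- combine
  have hr1p : r ≤ 1 / p := by
    rw [hncast] at hr
    calc r ≤ 2 / (2 * p) := hr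
      _ = 1 / p := by field_simp
  have hr2 : r ^ 2 ≤ 1 / p ^ 2 := by
    have := mul_le_mul hr1p hr1p hr0.le (by positivity)
    calc r ^ 2 = r * r := sq r
      _ ≤ 1 / p * (1 / p) := this
      _ = 1 / p ^ 2 := by ring
  have key : 1 / (p : ℝ) ^ 2 / 24 < (an / 2) * (1 / p) := by
    have h2p : (0:ℝ) < 1 / (2 * p) := by positivity
    have hmul := mul_lt_mul_of_pos_right han12p h2p
    calc 1 / (p : ℝ) ^ 2 / 24 = 1 / (12 * p) * (1 / (2 * p)) := by
          field_simp; ring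
      _ < an * (1 / (2 * p)) := hmul
      _ = an / 2 * (1 / p) := by ring
  calc r ^ 2 / 24 ≤ 1 / (p:ℝ) ^ 2 / 24 := by linarith
    _ < (an / 2) * (1 / p) := key
    _ ≤ (an / 2) * α := by
        apply mul_le_mul_of_nonneg_left hαge (by positivity)
end

section
/- Let n = 2p + 1 with p ≥ 1 an integer, let a_n = n^{1/(n-1)} - 1, let α_p = sin(2pπ/n)/(1 - cos(2pπ/n)), and let r be a real number with 0 < r ≤ 2/n. Then r²/24 < (a_{2p+1}/2)·α_p. -/
open Real

/-!
With `n = 2p + 1`, the half-angle formulas give `α_p = cot (pπ/n) = tan (π/(2n)) > π/(2n)`,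
and `log x ≤ x - 1` applied to `n^{1/(n-1)}` gives `a_n ≥ log n / (n - 1) > 1/n`, since
`log n > 1` for `n ≥ 3`. Hence `(a_n/2)·α_p > π/(4n²) > 1/(6n²) ≥ r²/24`.
-/

namespace Real

theorem sin_two_mul_div_one_sub_cos_two_mul (y : ℝ) :
    sin (2 * y) / (1 - cos (2 * y)) = cot y := by
  rw [sin_two_mul, cos_two_mul', cot_eq_cos_div_sin]
  rcases eq_or_ne (sin y) 0 with h | h
  · simp [h]
  · rw [show 1 - (cos y ^ 2 - sin y ^ 2) = 2 * sin y * sin y by nlinarith [sin_sq_add_cos_sq y]]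
    field_simp

theorem pi_div_two_sub_lt_cot {y : ℝ} (h0 : 0 < y) (h : y < π / 2) : π / 2 - y < cot y := by
  have h_tan : tan (π / 2 - y) = cot y := by
    rw [tan_eq_sin_div_cos, sin_pi_div_two_sub, cos_pi_div_two_sub, cot_eq_cos_div_sin]
  exact h_tan ▸ lt_tan (by linarith) (by linarith)

theorem mul_log_le_rpow_sub_one {x : ℝ} (hx : 0 < x) (y : ℝ) : y * log x ≤ x ^ y - 1 :=
  log_rpow hx y ▸ log_le_sub_one_of_pos (rpow_pos_of_pos hx y)

theorem one_div_lt_rpow_one_div_sub_one_sub_one {x : ℝ} (hx : exp 1 < x) :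
    1 / x < x ^ (1 / (x - 1)) - 1 := by
  have hx1 : 1 < x := lt_trans (one_lt_exp_iff.mpr one_pos) hx
  have h_log : 1 < log x := (lt_log_iff_exp_lt (by linarith)).mpr hx
  calc 1 / x < 1 / (x - 1) := one_div_lt_one_div_of_lt (by linarith) (by linarith)
    _ ≤ 1 / (x - 1) * log x := le_mul_of_one_le_right (by positivity) h_log.le
    _ ≤ x ^ (1 / (x - 1)) - 1 := mul_log_le_rpow_sub_one (by linarith) _

end Real

/-- Lemma 5 part 1 (odd case): for `n = 2p+1` with `p ≥ 1` and `0 < r ≤ 2/n`,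
`r²/24 < (a_{2p+1}/2)·α_p`. -/
theorem stmt_12 (p : ℕ) (hp : 1 ≤ p) (n : ℕ) (hn : n = 2 * p + 1)
    (an : ℝ) (han : an = (n : ℝ) ^ ((1 : ℝ) / ((n : ℝ) - 1)) - 1)
    (α : ℝ) (hα : α = Real.sin (2 * p * Real.pi / n) /
      (1 - Real.cos (2 * p * Real.pi / n)))
    (r : ℝ) (hr0 : 0 < r) (hr : r ≤ 2 / n) :
    r ^ 2 / 24 < (an / 2) * α := by
  have hp1 : (1 : ℝ) ≤ p := by exact_mod_cast hp
  have hn_eq : (n : ℝ) = 2 * p + 1 := by rw [hn]; push_cast; ring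
  have hn3 : exp 1 < n := by linarith [exp_one_lt_d9]
  have hn0 : (0 : ℝ) < n := by linarith
  have han_lt : 1 / (n : ℝ) < an := han ▸ one_div_lt_rpow_one_div_sub_one_sub_one hn3
  have hα_lt : π / (2 * n) < α := by
    have h_angle : π / 2 - p * π / n = π / (2 * n) := by field_simp; rw [hn_eq]; ring
    rw [hα, mul_assoc, mul_div_assoc, sin_two_mul_div_one_sub_cos_two_mul, ← h_angle]
    refine pi_div_two_sub_lt_cot (by positivity) ?_
    rw [div_lt_iff₀ hn0]
    nlinarith [pi_pos]
  have hr_sq : r ^ 2 ≤ (2 / n) ^ 2 := pow_le_pow_left₀ hr0.le hr 2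
  calc r ^ 2 / 24 ≤ (2 / n) ^ 2 / 24 := by gcongr
    _ < (1 / n / 2) * (π / (2 * n)) := by
      field_simp
      nlinarith [pi_gt_three]
    _ ≤ (an / 2) * α := by
      have : 0 < 1 / (n : ℝ) := by positivity
      gcongr
      linarith
end

section
/- Let n = 2p with p ≥ 2 an integer, set a_n = n^{1/(n-1)} - 1 and α_j = sin(2jπ/n)/(1 - cos(2jπ/n)) for 1 ≤ j ≤ n - 1. Let a be a real number with a_{2p} < a < 1 and let b > 0 satisfy b < (a_{2p}/2)·α_{p-1}. Then every v ∈ ℂ with Re v < a/2 - b satisfies |(v - a)^{2p} - v^{2p}| > 2p·(b·a_{2p})^p. -/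
/-!
Write `z = v - a/2`. The roots of `(v - a)^n = v^n` are `v = a/2 + i (a/2) cot(jπ/n)`,
`1 ≤ j < n`, and since `∏ (1 - ζ^j) = n` one gets
`|(v - a)^n - v^n| = |a| n ∏ |z - i t_j|` with `t_j = (a/2) cot(jπ/n)`.
For `n = 2p` the `t_j` pair off as `t_{2p-j} = -t_j`, with `t_p = 0`, and
`|z - i t| |z + i t| ≥ 2 |Re z| |t|`. Since `∏_{j<p} cot(jπ/2p) = 1`, this gives
`|(v - a)^{2p} - v^{2p}| ≥ 2p (|a| |Re z|)^p`, and `|Re z| > b`, `a > a_{2p} ≥ 0` finish.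
-/

open Real Complex Finset

lemma Real.cot_pi_sub (x : ℝ) : Real.cot (π - x) = -Real.cot x := by
  rw [Real.cot_eq_cos_div_sin, Real.cot_eq_cos_div_sin, Real.cos_pi_sub, Real.sin_pi_sub, neg_div]

lemma sin_mul_pi_div_pos {j n : ℕ} (hj : 0 < j) (hjn : j < n) : 0 < Real.sin (j * π / n) := by
  have hn : (0 : ℝ) < n := by exact_mod_cast hj.trans hjn
  apply Real.sin_pos_of_pos_of_lt_pi (by positivity)
  rw [div_lt_iff₀ hn, mul_comm π]
  gcongr

lemma prod_cot_mul_pi_div_two_mul_eq_one (p : ℕ) :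
    ∏ j ∈ Ico 1 p, Real.cot (j * π / (2 * p)) = 1 := by
  have hsin : ∀ j ∈ Ico 1 p, Real.sin (j * π / (2 * p)) ≠ 0 := by
    intro j hj
    rw [mem_Ico] at hj
    have := sin_mul_pi_div_pos (n := 2 * p) hj.1 (by omega)
    push_cast at this
    exact this.ne'
  have hcos : ∏ j ∈ Ico 1 p, Real.cos (j * π / (2 * p)) =
      ∏ j ∈ Ico 1 p, Real.sin (j * π / (2 * p)) :=
    calc ∏ j ∈ Ico 1 p, Real.cos (j * π / (2 * p))
        = ∏ j ∈ Ico 1 p, Real.sin ((p - j : ℕ) * π / (2 * p)) := by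
          refine prod_congr rfl fun j hj => ?_
          have hp : (p : ℝ) ≠ 0 := by exact_mod_cast (show p ≠ 0 by grind)
          rw [Nat.cast_sub (mem_Ico.mp hj).2.le, ← Real.sin_pi_div_two_sub]
          congr 1
          field_simp
      _ = ∏ j ∈ Ico (p + 1 - p) (p + 1 - 1), Real.sin (j * π / (2 * p)) :=
          prod_Ico_reflect (fun j : ℕ => Real.sin (j * π / (2 * p))) 1 (m := p) (by omega)
      _ = ∏ j ∈ Ico 1 p, Real.sin (j * π / (2 * p)) := by
          rw [add_tsub_cancel_left, add_tsub_cancel_right]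
  rw [prod_congr rfl fun j _ => Real.cot_eq_cos_div_sin _, prod_div_distrib, hcos,
    div_self (prod_ne_zero_iff.mpr hsin)]

lemma one_sub_exp_two_mul_I_ne_zero {x : ℝ} (hx : Real.sin x ≠ 0) : 1 - exp (2 * I * x) ≠ 0 := by
  rw [sub_ne_zero, ne_comm, Ne, Complex.exp_eq_one_iff]
  rintro ⟨k, hk⟩
  have hxk : (x : ℂ) = (k * π : ℝ) := by
    push_cast
    apply mul_left_cancel₀ (mul_ne_zero two_ne_zero I_ne_zero)
    linear_combination hk
  exact hx (by rw [ofReal_injective hxk, Real.sin_int_mul_pi])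

lemma sub_sub_exp_mul_eq {x : ℝ} (hx : Real.sin x ≠ 0) (v : ℂ) (a : ℝ) :
    (v - a) - exp (2 * I * x) * v =
      (1 - exp (2 * I * x)) * (v - a / 2 - I * (a / 2 * Real.cot x : ℝ)) := by
  have := one_sub_exp_two_mul_I_ne_zero hx
  push_cast
  rw [Complex.cot_eq_exp_ratio]
  field_simp
  ring

lemma IsPrimitiveRoot.prod_Ico_one_sub_pow {ζ : ℂ} {n : ℕ} (hζ : IsPrimitiveRoot ζ n)
    (hn : 0 < n) : ∏ j ∈ Ico 1 n, (1 - ζ ^ j) = n := by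
  obtain ⟨m, rfl⟩ : ∃ m, n = m + 1 := ⟨n - 1, by omega⟩
  rw [prod_Ico_eq_prod_range, add_tsub_cancel_right]
  simp_rw [add_comm 1]
  exact_mod_cast hζ.prod_one_sub_pow_eq_order

lemma prod_Ico_one_two_mul {M : Type*} [CommMonoid M] (f : ℕ → M) {p : ℕ} (hp : 0 < p) :
    ∏ j ∈ Ico 1 (2 * p), f j = f p * ∏ j ∈ Ico 1 p, (f j * f (2 * p - j)) := by
  have hreflect : ∏ j ∈ Ico 1 p, f (2 * p - j) = ∏ j ∈ Ico (p + 1) (2 * p), f j := by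
    rw [prod_Ico_reflect f 1 (n := 2 * p) (by omega)]
    congr 2; omega
  rw [prod_mul_distrib, hreflect,
    ← prod_Ico_consecutive f (by omega : 1 ≤ p) (by omega : p ≤ 2 * p),
    prod_eq_prod_Ico_succ_bot (by omega : p < 2 * p), mul_left_comm]

lemma two_mul_abs_re_mul_abs_le_norm_sub_mul_norm_add (z : ℂ) (t : ℝ) :
    2 * |z.re| * |t| ≤ ‖z - I * t‖ * ‖z + I * t‖ := by
  refine le_of_pow_le_pow_left₀ two_ne_zero (by positivity) ?_
  rw [mul_pow, mul_pow, mul_pow, sq_abs, sq_abs, Complex.sq_norm, Complex.sq_norm]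
  simp only [normSq_apply, sub_re, add_re, sub_im, add_im, mul_re, mul_im, I_re, I_im,
    ofReal_re, ofReal_im]
  -- with `A = re z ^ 2` and `B = t ^ 2 - im z ^ 2` the difference is `(A - B) ^ 2`
  nlinarith [sq_nonneg (z.re ^ 2 + z.im ^ 2 - t ^ 2)]

theorem norm_sub_pow_sub_pow_eq {n : ℕ} (hn : 0 < n) (v : ℂ) (a : ℝ) :
    ‖(v - a) ^ n - v ^ n‖ =
      |a| * n * ∏ j ∈ Ico 1 n, ‖v - a / 2 - I * (a / 2 * Real.cot (j * π / n) : ℝ)‖ := by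
  set ζ := exp (2 * π * I / n)
  have hζ : IsPrimitiveRoot ζ n := Complex.isPrimitiveRoot_exp n hn.ne'
  have hpow (j : ℕ) : ζ ^ j = exp (2 * I * (j * π / n : ℝ)) := by
    rw [← Complex.exp_nat_mul]
    push_cast
    ring_nf
  have hfactor : (v - a) ^ n - v ^ n = ∏ j ∈ range n, ((v - a) - ζ ^ j * v) := by
    simpa [Polynomial.eval_prod] using
      congrArg (Polynomial.eval (v - a)) (X_pow_sub_C_eq_prod hζ hn rfl)
  have hfactor_pos : ∀ j ∈ Ico 1 n, (v - a) - ζ ^ j * v =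
      (1 - ζ ^ j) * (v - a / 2 - I * (a / 2 * Real.cot (j * π / n) : ℝ)) := by
    intro j hj
    rw [mem_Ico] at hj
    rw [hpow, sub_sub_exp_mul_eq (sin_mul_pi_div_pos hj.1 hj.2).ne']
  rw [hfactor, range_eq_Ico, prod_eq_prod_Ico_succ_bot hn, pow_zero, one_mul, sub_sub_cancel_left,
    prod_congr rfl hfactor_pos, prod_mul_distrib, hζ.prod_Ico_one_sub_pow hn, norm_mul, norm_mul,
    norm_prod, norm_neg, norm_real, Complex.norm_natCast, Real.norm_eq_abs, mul_assoc]

theorem two_mul_mul_pow_le_norm_sub_pow_sub_pow {p : ℕ} (hp : 0 < p) (v : ℂ) (a : ℝ) :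
    2 * p * (|a| * |(v - a / 2).re|) ^ p ≤ ‖(v - a) ^ (2 * p) - v ^ (2 * p)‖ := by
  set z := v - a / 2
  set x := |z.re|
  set c : ℕ → ℝ := fun j => Real.cot (j * π / (2 * p : ℕ))
  set t : ℕ → ℝ := fun j => a / 2 * c j
  have hmid : x ≤ ‖z - I * t p‖ := by
    have htp : t p = 0 := by
      have : (p : ℝ) * π / (2 * p : ℕ) = π / 2 := by push_cast; field_simp
      simp only [t, c, this, Real.cot_eq_cos_div_sin, Real.cos_pi_div_two, zero_div, mul_zero]
    simpa [htp] using abs_re_le_norm z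
  have hpair : ∀ j ∈ Ico 1 p, x * (|a| * |c j|) ≤ ‖z - I * t j‖ * ‖z - I * t (2 * p - j)‖ := by
    intro j hj
    have hreflect : t (2 * p - j) = -t j := by
      have : ((2 * p - j : ℕ) : ℝ) * π / (2 * p : ℕ) = π - j * π / (2 * p : ℕ) := by
        rw [Nat.cast_sub (by grind)]
        field_simp
      simp only [t, c, this, Real.cot_pi_sub, mul_neg]
    have := two_mul_abs_re_mul_abs_le_norm_sub_mul_norm_add z (t j)
    rw [hreflect, ofReal_neg, mul_neg, sub_neg_eq_add]
    rw [abs_mul, abs_div, abs_two] at this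
    linarith
  have hcot : ∏ j ∈ Ico 1 p, |c j| = 1 := by
    rw [← abs_prod, ← abs_one]
    congr 1
    simp only [c, Nat.cast_mul, Nat.cast_ofNat]
    exact prod_cot_mul_pi_div_two_mul_eq_one p
  have hpow : (|a| * x) ^ p = |a| * x * (x * |a|) ^ (p - 1) := by
    rw [mul_comm x, ← pow_succ', Nat.sub_add_cancel hp]
  calc 2 * p * (|a| * x) ^ p
      = |a| * (2 * p : ℕ) * (x * ∏ j ∈ Ico 1 p, x * (|a| * |c j|)) := by
        rw [prod_mul_distrib, prod_mul_distrib, hcot, prod_const, prod_const, Nat.card_Ico, hpow]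
        push_cast
        ring
    _ ≤ |a| * (2 * p : ℕ) *
          (‖z - I * t p‖ * ∏ j ∈ Ico 1 p, (‖z - I * t j‖ * ‖z - I * t (2 * p - j)‖)) := by
        gcongr |a| * _ * (?_ * ?_)
        exact prod_le_prod (fun j _ => by positivity) hpair
    _ = ‖(v - a) ^ (2 * p) - v ^ (2 * p)‖ := by
        rw [norm_sub_pow_sub_pow_eq (by omega), prod_Ico_one_two_mul _ hp]

theorem stmt_13_general (p : ℕ) (hp : 2 ≤ p) (n : ℕ) (hn : n = 2 * p)
    (an : ℝ) (han : an = (n : ℝ) ^ ((1 : ℝ) / ((n : ℝ) - 1)) - 1)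
    (a : ℝ) (ha : an < a)
    (b : ℝ) (hb : 0 < b) :
    ∀ v : ℂ, v.re < a / 2 - b →
      ‖(v - (a : ℝ)) ^ (2 * p) - v ^ (2 * p)‖ > 2 * p * (b * an) ^ p := by
  intro v hv
  have hn1 : (1 : ℝ) ≤ n := by norm_cast; omega
  have han0 : 0 ≤ an := by
    rw [han, sub_nonneg]
    exact Real.one_le_rpow hn1 (by rw [one_div_nonneg]; linarith)
  have ha0 : 0 < a := han0.trans_lt ha
  have hre : b < |(v - a / 2).re| := by
    have : (v - a / 2).re = v.re - a / 2 := by simp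
    rw [this, abs_of_neg (by linarith)]
    linarith
  have hlt : b * an < |a| * |(v - a / 2).re| := by
    rw [abs_of_pos ha0]
    nlinarith
  calc 2 * p * (b * an) ^ p < 2 * p * (|a| * |(v - a / 2).re|) ^ p := by gcongr
    _ ≤ _ := two_mul_mul_pow_le_norm_sub_pow_sub_pow (by omega) v a

/-- Lemma 5 part 2 (even case): if `a_{2p} < a < 1` and `0 < b < (a_{2p}/2)·α_{p-1}`,
then every `v` with `Re v < a/2 - b` satisfies `|(v-a)^{2p} - v^{2p}| > 2p(b·a_{2p})^p`. -/
theorem stmt_13 (p : ℕ) (hp : 2 ≤ p) (n : ℕ) (hn : n = 2 * p)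
    (an : ℝ) (han : an = (n : ℝ) ^ ((1 : ℝ) / ((n : ℝ) - 1)) - 1)
    (α : ℕ → ℝ)
    (hα : ∀ j, 1 ≤ j → j ≤ n - 1 →
      α j = Real.sin (2 * j * Real.pi / n) / (1 - Real.cos (2 * j * Real.pi / n)))
    (a : ℝ) (ha : an < a) (ha1 : a < 1)
    (b : ℝ) (hb : 0 < b) (hbα : b < (an / 2) * α (p - 1)) :
    ∀ v : ℂ, v.re < a / 2 - b →
      ‖(v - (a : ℝ)) ^ (2 * p) - v ^ (2 * p)‖ > 2 * p * (b * an) ^ p :=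
  stmt_13_general p hp n hn an han a ha b hb
end

section
/- Let n = 2p + 1 with p ≥ 1 an integer, set a_n = n^{1/(n-1)} - 1 and α_j = sin(2jπ/n)/(1 - cos(2jπ/n)) for 1 ≤ j ≤ n - 1. Let a be a real number with a_{2p+1} < a < 1 and let b > 0 satisfy b < (a_{2p+1}/2)·α_p. Then every v ∈ ℂ with Re v < a/2 - b satisfies |(v - a)^{2p+1} - v^{2p+1}| > (2p+1)·a_{2p+1}^{p+1}·(b·√3/3)^p. -/
open Real Complex

open ComplexConjugate

/-!
With `ζ` a primitive `(2p+1)`-th root of unity,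
`(v - a)^(2p+1) - v^(2p+1) = -a ∏_{k=1}^{2p} ((1 - ζ^k) v - a)`. Pair the factors `k` and
`2p+1-k`, which involve `ζ^k` and its conjugate: with `m = a / (1 - ζ^k)`, whose real part is
`a/2`, the pair has norm `|1 - ζ^k|² |v - m| |v - m̄| ≥ |1 - ζ^k|² · 2|Im m| · |Re v - a/2|`,
which equals `|a| |1 - ζ^(2k)| |Re v - a/2|`. As `ζ²` is again primitive,
`∏_{k=1}^{2p} |1 - ζ^(2k)| = 2p+1`, and by the same symmetry the product over `k ≤ p` is
`√(2p+1)`. Hence `|(v - a)^(2p+1) - v^(2p+1)| ≥ |a|^(p+1) |Re v - a/2|^p √(2p+1)`, and the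
theorem follows from `a > a_n ≥ 0`, `|Re v - a/2| > b` and `√(2p+1) ≤ √3^p`.
-/

open Finset in
theorem Finset.prod_range_two_mul_eq_prod_mul_reflect {M : Type*} [CommMonoid M] (f : ℕ → M)
    (p : ℕ) : ∏ k ∈ range (2 * p), f k = ∏ j ∈ range p, f j * f (2 * p - 1 - j) := by
  rw [two_mul, prod_range_add, ← prod_range_reflect (fun k ↦ f (p + k)), ← prod_mul_distrib]
  refine prod_congr rfl fun j hj ↦ ?_
  rw [mem_range] at hj
  congr 2
  omega

theorem IsPrimitiveRoot.pow_sub_pow_eq_prod_range {R : Type*} [CommRing R] [IsDomain R] {ζ : R}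
    {n : ℕ} (hζ : IsPrimitiveRoot ζ n) (hn : 0 < n) (x y : R) :
    x ^ n - y ^ n = ∏ i ∈ Finset.range n, (x - ζ ^ i * y) := by
  simpa [Polynomial.eval_prod] using congrArg (Polynomial.eval x) (X_pow_sub_C_eq_prod hζ hn rfl)

theorem IsPrimitiveRoot.pow_sub_eq_conj_pow {ζ : ℂ} {n k : ℕ} (hζ : IsPrimitiveRoot ζ n)
    (hk : k ≤ n) : ζ ^ (n - k) = conj (ζ ^ k) := by
  rcases Nat.eq_zero_or_pos n with rfl | hn
  · simp [Nat.le_zero.1 hk]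
  rw [← Complex.inv_eq_conj (by rw [norm_pow, hζ.norm'_eq_one hn.ne', one_pow]),
    pow_sub₀ _ (hζ.ne_zero hn.ne') hk, hζ.pow_eq_one, one_mul]

theorem IsPrimitiveRoot.prod_range_norm_one_sub_pow_sq {η : ℂ} {p : ℕ}
    (hη : IsPrimitiveRoot η (2 * p + 1)) :
    (∏ j ∈ Finset.range p, ‖1 - η ^ (j + 1)‖) ^ 2 = 2 * p + 1 := by
  have hsym : ∀ j < p, ‖1 - η ^ (j + 1)‖ = ‖1 - η ^ (2 * p - 1 - j + 1)‖ := fun j hj ↦ by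
    rw [show 2 * p - 1 - j + 1 = 2 * p + 1 - (j + 1) by omega, hη.pow_sub_eq_conj_pow (by omega),
      ← Complex.norm_conj, map_sub, map_one]
  calc (∏ j ∈ Finset.range p, ‖1 - η ^ (j + 1)‖) ^ 2
      = ∏ j ∈ Finset.range p, ‖1 - η ^ (j + 1)‖ * ‖1 - η ^ (2 * p - 1 - j + 1)‖ := by
        rw [sq, ← Finset.prod_mul_distrib]
        exact Finset.prod_congr rfl fun j hj ↦ by rw [← hsym j (Finset.mem_range.1 hj)]
    _ = 2 * p + 1 := by
        rw [← Finset.prod_range_two_mul_eq_prod_mul_reflect (fun k ↦ ‖1 - η ^ (k + 1)‖),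
          ← norm_prod, hη.prod_one_sub_pow_eq_order]
        norm_cast

theorem Complex.norm_sub_conj_mul_abs_re_sub_le (z m : ℂ) :
    ‖m - conj m‖ * |z.re - m.re| ≤ ‖z - m‖ * ‖z - conj m‖ := by
  refine le_of_sq_le_sq ?_ (by positivity)
  rw [Complex.sub_conj, norm_mul, Complex.norm_I, mul_one, Complex.norm_real, Real.norm_eq_abs,
    mul_pow, mul_pow, sq_abs, sq_abs, Complex.sq_norm, Complex.sq_norm]
  simp only [Complex.normSq_apply, Complex.sub_re, Complex.sub_im, Complex.conj_re,
    Complex.conj_im]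
  nlinarith [sq_nonneg ((z.re - m.re) ^ 2 + z.im ^ 2 - m.im ^ 2)]

theorem Complex.abs_mul_norm_one_sub_sq_mul_le_of_norm_eq_one (w v : ℂ) (a : ℝ) (hw : ‖w‖ = 1) :
    |a| * ‖1 - w ^ 2‖ * |v.re - a / 2| ≤ ‖(1 - w) * v - a‖ * ‖(1 - conj w) * v - a‖ := by
  rcases eq_or_ne w 1 with rfl | hw1
  · simp only [one_pow, sub_self, norm_zero, mul_zero, zero_mul]
    positivity
  have hu : 1 - w ≠ 0 := sub_ne_zero.2 hw1.symm
  obtain ⟨m, hm⟩ : ∃ m, (1 - w) * m = a := ⟨a / (1 - w), mul_div_cancel₀ _ hu⟩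
  have hm_conj : (1 - conj w) * conj m = a := by
    simpa only [map_mul, map_sub, map_one, Complex.conj_ofReal] using congrArg conj hm
  have hw_conj : w * conj w = 1 := by
    rw [Complex.mul_conj', hw]; norm_num
  have hm_conj' : (1 - w) * conj m = -a * w := by
    linear_combination -w * hm_conj - conj m * hw_conj
  have hre : m.re = a / 2 := by
    have hsum : m + conj m = a := mul_left_cancel₀ hu (by linear_combination hm + hm_conj')
    rw [Complex.add_conj, Complex.ofReal_inj] at hsum
    linarith
  have hdiff : (1 - w) * (m - conj m) = a * (1 + w) := by linear_combination hm - hm_conj'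
  have h1 : (1 - w) * v - a = (1 - w) * (v - m) := by linear_combination hm
  have h2 : (1 - conj w) * v - a = conj (1 - w) * (v - conj m) := by
    rw [map_sub, map_one]; linear_combination hm_conj
  have hscale : |a| * ‖1 - w ^ 2‖ = ‖1 - w‖ * ‖1 - w‖ * ‖m - conj m‖ := by
    calc |a| * ‖1 - w ^ 2‖ = ‖1 - w‖ * ‖(a : ℂ) * (1 + w)‖ := by
          rw [show (1 : ℂ) - w ^ 2 = (1 - w) * (1 + w) by ring, norm_mul, norm_mul,
            Complex.norm_real, Real.norm_eq_abs]
          ring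
      _ = ‖1 - w‖ * ‖1 - w‖ * ‖m - conj m‖ := by rw [← hdiff, norm_mul, mul_assoc]
  calc |a| * ‖1 - w ^ 2‖ * |v.re - a / 2|
      = ‖1 - w‖ * ‖1 - w‖ * (‖m - conj m‖ * |v.re - m.re|) := by rw [hscale, hre, mul_assoc]
    _ ≤ ‖1 - w‖ * ‖1 - w‖ * (‖v - m‖ * ‖v - conj m‖) :=
        mul_le_mul_of_nonneg_left (Complex.norm_sub_conj_mul_abs_re_sub_le v m) (by positivity)
    _ = ‖(1 - w) * v - a‖ * ‖(1 - conj w) * v - a‖ := by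
        rw [h1, h2, norm_mul, norm_mul, Complex.norm_conj]
        ring

theorem IsPrimitiveRoot.pow_mul_sqrt_le_norm_sub_pow_sub_pow {ζ : ℂ} {p : ℕ}
    (hζ : IsPrimitiveRoot ζ (2 * p + 1)) (a : ℝ) (v : ℂ) :
    |a| ^ (p + 1) * |v.re - a / 2| ^ p * √(2 * p + 1) ≤
      ‖(v - a) ^ (2 * p + 1) - v ^ (2 * p + 1)‖ := by
  have hpair : ∀ j < p, |a| * |v.re - a / 2| * ‖1 - (ζ ^ 2) ^ (j + 1)‖ ≤
      ‖v - a - ζ ^ (j + 1) * v‖ * ‖v - a - ζ ^ (2 * p - 1 - j + 1) * v‖ := fun j hj ↦ by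
    rw [show 2 * p - 1 - j + 1 = 2 * p + 1 - (j + 1) by omega, hζ.pow_sub_eq_conj_pow (by omega),
      ← pow_mul, mul_comm 2, pow_mul, mul_right_comm]
    simp only [show ∀ w : ℂ, v - a - w * v = (1 - w) * v - a from fun w ↦ by ring]
    exact Complex.abs_mul_norm_one_sub_sq_mul_le_of_norm_eq_one _ v a
      (by rw [norm_pow, hζ.norm'_eq_one (by omega), one_pow])
  have hη : IsPrimitiveRoot (ζ ^ 2) (2 * p + 1) :=
    hζ.pow_of_coprime 2 (by simp [Nat.coprime_mul_left_add_right])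
  have hsqrt : ∏ j ∈ Finset.range p, ‖1 - (ζ ^ 2) ^ (j + 1)‖ = √(2 * p + 1) := by
    rw [← hη.prod_range_norm_one_sub_pow_sq, Real.sqrt_sq (by positivity)]
  calc |a| ^ (p + 1) * |v.re - a / 2| ^ p * √(2 * p + 1)
      = (∏ j ∈ Finset.range p, |a| * |v.re - a / 2| * ‖1 - (ζ ^ 2) ^ (j + 1)‖) * |a| := by
        rw [Finset.prod_mul_distrib, Finset.prod_const, Finset.card_range, hsqrt, mul_pow]
        ring
    _ ≤ (∏ j ∈ Finset.range p,
          ‖v - a - ζ ^ (j + 1) * v‖ * ‖v - a - ζ ^ (2 * p - 1 - j + 1) * v‖) *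
          ‖v - a - ζ ^ 0 * v‖ := by
        refine mul_le_mul (Finset.prod_le_prod (fun _ _ ↦ by positivity)
          fun j hj ↦ hpair j (Finset.mem_range.1 hj)) (le_of_eq ?_) (by positivity) (by positivity)
        simp
    _ = ‖(v - a) ^ (2 * p + 1) - v ^ (2 * p + 1)‖ := by
        rw [hζ.pow_sub_pow_eq_prod_range (by omega), Finset.prod_range_succ',
          Finset.prod_range_two_mul_eq_prod_mul_reflect, norm_mul, norm_prod]
        simp only [norm_mul]

theorem two_mul_add_one_mul_pow_le (p : ℕ) {b : ℝ} (hb : 0 ≤ b) :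
    (2 * p + 1) * (b * √3 / 3) ^ p ≤ √(2 * p + 1) * b ^ p := by
  have hbern : (2 * p + 1 : ℝ) ≤ 3 ^ p :=
    calc (2 * p + 1 : ℝ) = 1 + p * 2 := by ring
      _ ≤ (1 + 2) ^ p := one_add_mul_le_pow (by norm_num) p
      _ = 3 ^ p := by norm_num
  have hsqrt : √(2 * p + 1) ≤ √3 ^ p := by
    rw [Real.sqrt_le_iff, ← pow_mul, mul_comm p 2, pow_mul, Real.sq_sqrt (by norm_num)]
    exact ⟨by positivity, hbern⟩
  have h3 : (0 : ℝ) < √3 ^ p := by positivity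
  calc (2 * p + 1) * (b * √3 / 3) ^ p = √(2 * p + 1) * √(2 * p + 1) * b ^ p / √3 ^ p := by
        rw [Real.mul_self_sqrt (by positivity), mul_div_assoc, Real.sqrt_div_self, mul_pow,
          inv_pow]
        ring
    _ ≤ √(2 * p + 1) * √3 ^ p * b ^ p / √3 ^ p := by gcongr
    _ = √(2 * p + 1) * b ^ p := by field_simp

theorem stmt_14_general (p : ℕ) (n : ℕ) (hn : n = 2 * p + 1)
    (an : ℝ) (han : an = (n : ℝ) ^ ((1 : ℝ) / ((n : ℝ) - 1)) - 1)
    (a : ℝ) (ha : an < a)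
    (b : ℝ) (hb : 0 < b) :
    ∀ v : ℂ, v.re < a / 2 - b →
      ‖(v - (a : ℝ)) ^ (2 * p + 1) - v ^ (2 * p + 1)‖ >
        (2 * p + 1) * an ^ (p + 1) * (b * Real.sqrt 3 / 3) ^ p := by
  intro v hv
  have hn1 : (1 : ℝ) ≤ n := by rw [hn]; norm_cast; omega
  have han0 : 0 ≤ an := by
    rw [han, sub_nonneg]
    exact Real.one_le_rpow hn1 (one_div_nonneg.2 (sub_nonneg.2 hn1))
  have hbx : b < |v.re - a / 2| := by rw [abs_of_neg (by linarith)]; linarith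
  have ha0 : |a| = a := abs_of_pos (han0.trans_lt ha)
  have hζ := Complex.isPrimitiveRoot_exp (2 * p + 1) (by omega)
  have hpow : an ^ (p + 1) * b ^ p < |a| ^ (p + 1) * |v.re - a / 2| ^ p := by
    rw [ha0]
    exact mul_lt_mul (pow_lt_pow_left₀ ha han0 (by omega)) (pow_le_pow_left₀ hb.le hbx.le p)
      (by positivity) (pow_nonneg (han0.trans ha.le) _)
  calc (2 * p + 1) * an ^ (p + 1) * (b * √3 / 3) ^ p
      ≤ an ^ (p + 1) * (√(2 * p + 1) * b ^ p) := by
        rw [mul_right_comm, mul_comm]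
        exact mul_le_mul_of_nonneg_left (two_mul_add_one_mul_pow_le p hb.le) (pow_nonneg han0 _)
    _ = an ^ (p + 1) * b ^ p * √(2 * p + 1) := by ring
    _ < |a| ^ (p + 1) * |v.re - a / 2| ^ p * √(2 * p + 1) := by gcongr
    _ ≤ _ := hζ.pow_mul_sqrt_le_norm_sub_pow_sub_pow a v

/-- Lemma 5 part 2 (odd case): if `a_{2p+1} < a < 1` and `0 < b < (a_{2p+1}/2)·α_p`,
then every `v` with `Re v < a/2 - b` satisfies
`|(v-a)^{2p+1} - v^{2p+1}| > (2p+1)·a_{2p+1}^{p+1}·(b√3/3)^p`. -/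
theorem stmt_14 (p : ℕ) (hp : 1 ≤ p) (n : ℕ) (hn : n = 2 * p + 1)
    (an : ℝ) (han : an = (n : ℝ) ^ ((1 : ℝ) / ((n : ℝ) - 1)) - 1)
    (α : ℕ → ℝ)
    (hα : ∀ j, 1 ≤ j → j ≤ n - 1 →
      α j = Real.sin (2 * j * Real.pi / n) / (1 - Real.cos (2 * j * Real.pi / n)))
    (a : ℝ) (ha : an < a) (ha1 : a < 1)
    (b : ℝ) (hb : 0 < b) (hbα : b < (an / 2) * α p) :
    ∀ v : ℂ, v.re < a / 2 - b →
      ‖(v - (a : ℝ)) ^ (2 * p + 1) - v ^ (2 * p + 1)‖ >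
        (2 * p + 1) * an ^ (p + 1) * (b * Real.sqrt 3 / 3) ^ p :=
  stmt_14_general p n hn an han a ha b hb
end

section
/- Let n ≥ 2 be an integer and a > 0 a real number, and for 1 ≤ j ≤ n - 1 set α_j = sin(2jπ/n)/(1 - cos(2jπ/n)) and v_j = (a/2)(1 + i·α_j). Then a complex number v satisfies (v - a)^n - v^n = 0 if and only if v = v_j for some j ∈ {1, …, n-1}; in particular the v_j are exactly the n - 1 roots of the polynomial v ↦ (v - a)^n - v^n. -/
open Real Complex

lemma key' (a s c : ℝ) (hsc : s^2 + c^2 = 1) (hc : c ≠ 1) :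
    ((a:ℂ)/2) * (1 + ((s / (1 - c) : ℝ) : ℂ) * Complex.I) * (1 - ((c:ℂ) + (s:ℂ) * Complex.I)) = a := by
  have h2 : ((1:ℝ) - c) ≠ 0 := sub_ne_zero.mpr (Ne.symm hc)
  have h1 : (1:ℂ) - (c:ℂ) ≠ 0 := by exact_mod_cast sub_ne_zero.mpr (fun h => hc (by exact_mod_cast h.symm))
  have hsC : ((s:ℂ))^2 + (c:ℂ)^2 = 1 := by exact_mod_cast congrArg (fun x : ℝ => (x:ℂ)) hsc
  push_cast
  field_simp
  ring_nf
  linear_combination (-(a:ℂ)*(s:ℂ)^2) * Complex.I_sq + (a:ℂ) * hsC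

lemma key (a θ : ℝ) (hc : Real.cos θ ≠ 1) :
    ((a:ℂ)/2) * (1 + (Real.sin θ / (1 - Real.cos θ) : ℝ) * Complex.I) * (1 - Complex.exp (θ * Complex.I)) = a := by
  rw [Complex.exp_mul_I, ← Complex.ofReal_cos, ← Complex.ofReal_sin]
  exact key' a _ _ (Real.sin_sq_add_cos_sq θ) hc

lemma hcos_ne (n j : ℕ) (hn : 2 ≤ n) (hj1 : 1 ≤ j) (hj2 : j ≤ n - 1) :
    Real.cos (2 * j * Real.pi / n) ≠ 1 := by
  have hπ := Real.pi_pos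
  have hn0 : (0:ℝ) < n := by positivity
  have hjn : (j:ℝ) < n := by exact_mod_cast (by omega : j < n)
  have hθ0 : 0 < 2 * (j:ℝ) * Real.pi / n := by
    have : (0:ℝ) < j := by exact_mod_cast hj1
    positivity
  have hθ2 : 2 * (j:ℝ) * Real.pi / n < 2 * Real.pi := by
    rw [div_lt_iff₀ hn0]
    nlinarith
  intro h
  rw [Real.cos_eq_one_iff_of_lt_of_lt (by linarith) hθ2] at h
  linarith

/-- Equation (1): the roots of `v ↦ (v-a)^n - v^n` are exactly the points
`v_j = (a/2)(1 + i·α_j)`, `1 ≤ j ≤ n-1`, where `α_j = sin(2jπ/n)/(1 - cos(2jπ/n))`. -/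
theorem stmt_15 (n : ℕ) (hn : 2 ≤ n) (a : ℝ) (ha : 0 < a) (v : ℂ) :
    (v - (a : ℝ)) ^ n - v ^ n = 0 ↔
      ∃ j : ℕ, 1 ≤ j ∧ j ≤ n - 1 ∧
        v = ((a : ℂ) / 2) * (1 + (Real.sin (2 * j * Real.pi / n) /
          (1 - Real.cos (2 * j * Real.pi / n)) : ℝ) * Complex.I) := by
  have hn0 : n ≠ 0 := by omega
  have ha0 : (a:ℂ) ≠ 0 := by exact_mod_cast ha.ne'
  have hnR : ((n:ℂ)) ≠ 0 := by exact_mod_cast hn0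
  constructor
  · intro h
    rw [sub_eq_zero] at h
    have hv : v ≠ 0 := by
      intro h0
      rw [h0, zero_sub, zero_pow hn0] at h
      exact ha0 (neg_eq_zero.mp (pow_eq_zero_iff hn0 |>.mp h))
    have hwn : ((v - (a:ℂ))/v) ^ n = 1 := by
      rw [div_pow, h, div_self (pow_ne_zero n hv)]
    haveI : NeZero n := ⟨hn0⟩
    obtain ⟨j, hjn, hj⟩ := (Complex.isPrimitiveRoot_exp n hn0).eq_pow_of_pow_eq_one hwn
    have hzeta : Complex.exp (2*Real.pi*Complex.I/n) ^ j = Complex.exp ((2*(j:ℝ)*Real.pi/n : ℝ) * Complex.I) := by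
      rw [← Complex.exp_nat_mul]
      congr 1
      push_cast
      ring
    rw [hzeta] at hj
    have hw1 : (v - (a:ℂ))/v ≠ 1 := by
      intro h1
      rw [div_eq_one_iff_eq hv] at h1
      apply ha0
      linear_combination -h1
    have hj1 : 1 ≤ j := by
      rcases Nat.eq_zero_or_pos j with h0 | h0
      · exfalso
        apply hw1
        rw [← hj, h0]
        push_cast
        simp
      · exact h0
    refine ⟨j, hj1, by omega, ?_⟩
    have hcos := hcos_ne n j hn hj1 (by omega)
    have hk := key a (2*(j:ℝ)*Real.pi/n) hcos
    have hexp1 : Complex.exp ((2*(j:ℝ)*Real.pi/n : ℝ) * Complex.I) ≠ 1 := by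
      rw [hj]; exact hw1
    have hne : (1 : ℂ) - Complex.exp ((2*(j:ℝ)*Real.pi/n : ℝ) * Complex.I) ≠ 0 :=
      sub_ne_zero.mpr (Ne.symm hexp1)
    have hveq : v * (1 - Complex.exp ((2*(j:ℝ)*Real.pi/n : ℝ) * Complex.I)) = a := by
      have : v - (a:ℂ) = v * (Complex.exp ((2*(j:ℝ)*Real.pi/n : ℝ) * Complex.I)) := by
        rw [hj]
        field_simp
      linear_combination this
    have := mul_right_cancel₀ hne (hveq.trans hk.symm)
    exact this
  · rintro ⟨j, hj1, hj2, rfl⟩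
    have hcos := hcos_ne n j hn hj1 hj2
    have hk := key a (2*(j:ℝ)*Real.pi/n) hcos
    set V := ((a:ℂ)/2) * (1 + (Real.sin (2*(j:ℝ)*Real.pi/n) / (1 - Real.cos (2*(j:ℝ)*Real.pi/n)) : ℝ) * Complex.I) with hV
    have hveq : V - (a:ℂ) = V * Complex.exp ((2*(j:ℝ)*Real.pi/n : ℝ) * Complex.I) := by
      linear_combination hk
    rw [hveq, mul_pow, ← Complex.exp_nat_mul]
    have : ((n:ℂ)) * (((2*(j:ℝ)*Real.pi/n : ℝ)) * Complex.I) = (j:ℂ) * (2 * Real.pi * Complex.I) := by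
      push_cast
      field_simp
    rw [this]
    have : Complex.exp ((j:ℂ) * (2 * Real.pi * Complex.I)) = 1 := by
      exact_mod_cast Complex.exp_int_mul_two_pi_mul_I (j:ℤ)
    rw [this]
    ring
end

section
/- Let n ≥ 2 be an integer and a > 0 a real number, and for 1 ≤ j ≤ n - 1 set α_j = sin(2jπ/n)/(1 - cos(2jπ/n)). Then for every v ∈ ℂ, |(v - a)^n - v^n|² = n²·a²·∏_{j=1}^{n-1} ( (Re v - a/2)² + (Im v - (a/2)·α_j)² ). -/
/-!
With `ζ = exp (2πi/n)`, `(v - a)^n - v^n = ∏_{k<n} (v - a - ζ^k v)`. The factor `k = 0` is `-a`;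
for `0 < k < n` the factor is `(1 - ζ^k) (v - v_k)` with `v_k = a / (1 - ζ^k)`, and
`∏_{0<k<n} (1 - ζ^k) = n`. Since `a / (1 - e^{iθ}) = (a/2)(1 + i cot (θ/2))` and
`cot (θ/2) = sin θ / (1 - cos θ)`, taking squared norms gives the formula.
-/

open Real Complex Finset

theorem IsPrimitiveRoot.pow_sub_pow_eq_prod_range_sub_mul {R : Type*} [CommRing R] [IsDomain R]
    {ζ : R} {n : ℕ} (hζ : IsPrimitiveRoot ζ n) (hn : 0 < n) (x y : R) :
    x ^ n - y ^ n = ∏ k ∈ range n, (x - ζ ^ k * y) := by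
  classical
  have himage : Polynomial.nthRootsFinset n (1 : R) = (range n).image (ζ ^ ·) := by
    simp [Polynomial.nthRootsFinset, hζ.nthRoots_eq (one_pow n), Multiset.toFinset_map]
  rw [hζ.pow_sub_pow_eq_prod_sub_mul x y hn, himage,
    prod_image fun i hi j hj h => hζ.pow_inj (mem_range.1 hi) (mem_range.1 hj) h]

theorem IsPrimitiveRoot.sub_pow_sub_pow_eq_mul_prod_sub {R : Type*} [CommRing R] [IsDomain R]
    {ζ : R} {m : ℕ} (hζ : IsPrimitiveRoot ζ (m + 1)) {a : R} {w : ℕ → R}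
    (hw : ∀ k < m, (1 - ζ ^ (k + 1)) * w k = a) (v : R) :
    (v - a) ^ (m + 1) - v ^ (m + 1) = -a * ((m + 1 : ℕ) : R) * ∏ k ∈ range m, (v - w k) := by
  have hfactor : ∀ k ∈ range m, v - a - ζ ^ (k + 1) * v = (1 - ζ ^ (k + 1)) * (v - w k) := by
    intro k hk
    linear_combination hw k (mem_range.1 hk)
  rw [hζ.pow_sub_pow_eq_prod_range_sub_mul m.succ_pos, prod_range_succ', prod_congr rfl hfactor,
    prod_mul_distrib, hζ.prod_one_sub_pow_eq_order]
  push_cast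
  ring

theorem Complex.one_sub_exp_mul_I_mul_eq {θ : ℝ} (h : exp (θ * I) ≠ 1) (a : ℝ) :
    (1 - exp (θ * I)) * (a / 2 * (1 + (Real.sin θ / (1 - Real.cos θ) : ℝ) * I)) = a := by
  have hcos : 1 - Real.cos θ ≠ 0 := by
    intro hc
    have hsin : Real.sin θ = 0 := by nlinarith [Real.sin_sq_add_cos_sq θ]
    apply h
    rw [exp_mul_I, ← ofReal_cos, ← ofReal_sin, hsin, ← sub_eq_zero.1 hc]
    simp
  have hpyth : (Real.sin θ : ℂ) ^ 2 + (Real.cos θ : ℂ) ^ 2 = 1 := by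
    exact_mod_cast Real.sin_sq_add_cos_sq θ
  have hcos' : (1 - Real.cos θ : ℂ) ≠ 0 := by exact_mod_cast hcos
  rw [exp_mul_I, ← ofReal_cos, ← ofReal_sin, ofReal_div, ofReal_sub, ofReal_one]
  field_simp
  linear_combination a * hpyth + (-a * (Real.sin θ : ℂ) ^ 2) * I_sq

theorem Complex.sq_norm_sub_half_mul (v : ℂ) (a α : ℝ) :
    ‖v - a / 2 * (1 + α * I)‖ ^ 2 = (v.re - a / 2) ^ 2 + (v.im - a / 2 * α) ^ 2 := by
  rw [Complex.sq_norm, normSq_apply]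
  simp only [sub_re, sub_im, mul_re, mul_im, add_re, add_im, div_ofNat_re, div_ofNat_im, ofReal_re,
    ofReal_im, one_re, one_im, I_re, I_im]
  ring

theorem stmt_16_general (n : ℕ) (a : ℝ) (v : ℂ) :
    (‖(v - (a : ℝ)) ^ n - v ^ n‖) ^ 2 =
      (n : ℝ) ^ 2 * a ^ 2 * ∏ j ∈ Finset.Icc 1 (n - 1),
        ((v.re - a / 2) ^ 2 + (v.im - (a / 2) * (Real.sin (2 * j * Real.pi / n) /
          (1 - Real.cos (2 * j * Real.pi / n)))) ^ 2) := by
  obtain _ | m := n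
  · simp
  set θ : ℕ → ℝ := fun j => 2 * j * π / (m + 1 : ℕ)
  set α : ℕ → ℝ := fun j => Real.sin (θ j) / (1 - Real.cos (θ j))
  set ζ := exp (2 * π * I / (m + 1 : ℕ))
  have hζ : IsPrimitiveRoot ζ (m + 1) := isPrimitiveRoot_exp (m + 1) m.succ_ne_zero
  have hpow : ∀ j : ℕ, ζ ^ j = exp (θ j * I) := fun j => by
    rw [← Complex.exp_nat_mul]
    push_cast [θ]
    ring_nf
  have hw : ∀ k < m, (1 - ζ ^ (k + 1)) * (a / 2 * (1 + α (k + 1) * I)) = a := fun k hk => by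
    have hζk : ζ ^ (k + 1) ≠ 1 := hζ.pow_ne_one_of_pos_of_lt k.succ_ne_zero (by omega)
    rw [hpow] at hζk ⊢
    exact one_sub_exp_mul_I_mul_eq hζk a
  rw [hζ.sub_pow_sub_pow_eq_mul_prod_sub hw, ← Ico_add_one_right_eq_Icc, prod_Ico_eq_prod_range]
  simp only [norm_mul, norm_prod, mul_pow, ← prod_pow, norm_neg, Complex.norm_real,
    Real.norm_eq_abs, sq_abs, Complex.norm_natCast]
  rw [prod_congr rfl fun k _ => sq_norm_sub_half_mul v a (α (k + 1))]
  simp only [Nat.add_sub_cancel, add_comm 1, mul_comm (a ^ 2), α, θ]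

/-- Factorization of `|(v-a)^n - v^n|²` through the roots `v_j = (a/2)(1 + i α_j)`:
`|(v-a)^n - v^n|² = n² a² ∏_{j=1}^{n-1} ((Re v - a/2)² + (Im v - (a/2)α_j)²)`. -/
theorem stmt_16 (n : ℕ) (hn : 2 ≤ n) (a : ℝ) (ha : 0 < a) (v : ℂ) :
    (‖(v - (a : ℝ)) ^ n - v ^ n‖) ^ 2 =
      (n : ℝ) ^ 2 * a ^ 2 * ∏ j ∈ Finset.Icc 1 (n - 1),
        ((v.re - a / 2) ^ 2 + (v.im - (a / 2) * (Real.sin (2 * j * Real.pi / n) /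
          (1 - Real.cos (2 * j * Real.pi / n)))) ^ 2) :=
  stmt_16_general n a v
end

section
/- Let n = 2p with p ≥ 2 an integer, set a_n = n^{1/(n-1)} - 1 and α_j = sin(2jπ/n)/(1 - cos(2jπ/n)) for 1 ≤ j ≤ n - 1. Let a be a real number with a > a_{2p} and let b > 0. Then for every y ∈ ℝ, ∏_{j=1}^{2p-1} ( b² + (y - (a/2)·α_j)² ) > b^{2p}·a_{2p}^{2(p-1)}. -/
open Real

/-- Lemma 5 (even case, bound on `C_{2p}(y)`): for `a > a_{2p}` and `b > 0`,
`∏_{j=1}^{2p-1} (b² + (y - (a/2)α_j)²) > b^{2p} a_{2p}^{2(p-1)}` for all real `y`. -/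
theorem stmt_17 (p : ℕ) (hp : 2 ≤ p) (n : ℕ) (hn : n = 2 * p)
    (an : ℝ) (han : an = (n : ℝ) ^ ((1 : ℝ) / ((n : ℝ) - 1)) - 1)
    (a : ℝ) (ha : an < a) (b : ℝ) (hb : 0 < b) :
    ∀ y : ℝ, ∏ j ∈ Finset.Icc 1 (2 * p - 1),
        (b ^ 2 + (y - (a / 2) * (Real.sin (2 * j * Real.pi / n) /
          (1 - Real.cos (2 * j * Real.pi / n)))) ^ 2)
      > b ^ (2 * p) * an ^ (2 * (p - 1)) := by
  intro y
  subst hn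
  have hπ := Real.pi_pos
  have hp2 : (2:ℝ) ≤ (p:ℝ) := by exact_mod_cast hp
  have hpR : (0:ℝ) < (p:ℝ) := by linarith
  set x : ℕ → ℝ := fun j => (j:ℝ) * π / (2*(p:ℝ)) with hxdef
  set c : ℕ → ℝ := fun j => Real.cos (x j) / Real.sin (x j) with hcdef
  -- an > 0
  have han0 : 0 < an := by
    rw [han]
    have h1 : (1:ℝ) < ((2*p:ℕ):ℝ) := by push_cast; nlinarith
    have h2 : (0:ℝ) < (1:ℝ)/(((2*p:ℕ):ℝ) - 1) := div_pos one_pos (by linarith)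
    have h3 : (1:ℝ) < ((2*p:ℕ):ℝ) ^ ((1:ℝ)/(((2*p:ℕ):ℝ) - 1)) :=
      Real.one_lt_rpow_iff_of_pos (by linarith) |>.mpr (Or.inl ⟨h1, h2⟩)
    linarith
  have ha0 : 0 < a := lt_trans han0 ha
  -- positivity/range of angles
  have hxpos : ∀ j : ℕ, 1 ≤ j → 0 < x j := by
    intro j hj
    have h1 : (1:ℝ) ≤ (j:ℝ) := by exact_mod_cast hj
    simp only [hxdef]
    apply div_pos (by nlinarith) (by linarith)
  have hxlt : ∀ j : ℕ, j < 2*p → x j < π := by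
    intro j hj
    have h1 : (j:ℝ) < 2*(p:ℝ) := by exact_mod_cast (by push_cast; exact_mod_cast hj : (j:ℝ) < ((2*p:ℕ):ℝ))
    simp only [hxdef]
    rw [div_lt_iff₀ (by linarith)]
    nlinarith
  have hsin : ∀ j : ℕ, 1 ≤ j → j < 2*p → 0 < Real.sin (x j) := fun j h1 h2 =>
    Real.sin_pos_of_pos_of_lt_pi (hxpos j h1) (hxlt j h2)
  -- rewrite α_j as cot of half angle
  have hf : ∀ j : ℕ, 1 ≤ j → j < 2*p →
      Real.sin (2 * (j:ℝ) * Real.pi / ((2*p:ℕ):ℝ)) /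
        (1 - Real.cos (2 * (j:ℝ) * Real.pi / ((2*p:ℕ):ℝ))) = c j := by
    intro j h1 h2
    have hang : 2 * (j:ℝ) * Real.pi / ((2*p:ℕ):ℝ) = 2 * x j := by
      simp only [hxdef]; push_cast; ring
    rw [hang, Real.sin_two_mul, Real.cos_two_mul]
    have hs := hsin j h1 h2
    have h1' : 1 - (2 * Real.cos (x j) ^ 2 - 1) = 2 * Real.sin (x j) ^ 2 := by
      nlinarith [Real.sin_sq_add_cos_sq (x j)]
    rw [h1']
    simp only [hcdef]
    field_simp
  -- G is the simplified factor
  set G : ℕ → ℝ := fun j => b^2 + (y - (a/2) * c j)^2 with hGdef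
  have hprod : ∏ j ∈ Finset.Icc 1 (2*p-1),
      (b ^ 2 + (y - (a / 2) * (Real.sin (2 * j * Real.pi / ((2*p:ℕ):ℝ)) /
        (1 - Real.cos (2 * j * Real.pi / ((2*p:ℕ):ℝ))))) ^ 2)
      = ∏ j ∈ Finset.Icc 1 (2*p-1), G j := by
    refine Finset.prod_congr rfl (fun j hj => ?_)
    rw [Finset.mem_Icc] at hj
    rw [hf j hj.1 (by omega)]
  rw [hprod]
  -- split the product
  have hIcc : Finset.Icc 1 (2*p-1) = Finset.Ico 1 (2*p) := by
    rw [← Finset.Ico_add_one_right_eq_Icc]; congr 1; omega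
  rw [hIcc]
  have hsplit : ∏ j ∈ Finset.Ico 1 (2*p), G j
      = (∏ j ∈ Finset.Ico 1 p, G j) * ∏ j ∈ Finset.Ico p (2*p), G j :=
    (Finset.prod_Ico_consecutive G (by omega) (by omega)).symm
  have hmid : ∏ j ∈ Finset.Ico p (2*p), G j = G p * ∏ j ∈ Finset.Ico (p+1) (2*p), G j :=
    Finset.prod_eq_prod_Ico_succ_bot (by omega) G
  have hreflect : ∏ j ∈ Finset.Ico (p+1) (2*p), G j = ∏ j ∈ Finset.Ico 1 p, G (2*p - j) := by
    apply Finset.prod_nbij' (fun j => 2*p - j) (fun j => 2*p - j)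
    · intro a ha; rw [Finset.mem_Ico] at *; omega
    · intro a ha; rw [Finset.mem_Ico] at *; omega
    · intro a ha; rw [Finset.mem_Ico] at ha; omega
    · intro a ha; rw [Finset.mem_Ico] at ha; omega
    · intro a ha; rw [Finset.mem_Ico] at ha; congr 1; omega
  rw [hsplit, hmid, hreflect, mul_left_comm, ← Finset.prod_mul_distrib]
  -- reflection identity for c
  have hcref : ∀ j : ℕ, 1 ≤ j → j < p → c (2*p - j) = - c j := by
    intro j h1 h2
    have hcast : ((2*p - j:ℕ):ℝ) = 2*(p:ℝ) - (j:ℝ) := by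
      push_cast [Nat.cast_sub (by omega : j ≤ 2*p)]; ring
    have hang : x (2*p - j) = π - x j := by
      simp only [hxdef, hcast]; field_simp
    simp only [hcdef, hang, Real.sin_pi_sub, Real.cos_pi_sub, neg_div]
  -- pair lower bound
  have hpair : ∀ j ∈ Finset.Ico 1 p, b^2 * (a * c j)^2 ≤ G j * G (2*p - j) := by
    intro j hj
    rw [Finset.mem_Ico] at hj
    rw [hGdef]
    simp only
    rw [hcref j hj.1 hj.2]
    nlinarith [sq_nonneg (y^2 + b^2 - ((a/2) * c j)^2), sq_nonneg (c j), hb.le]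
  have hnonneg : ∀ j ∈ Finset.Ico 1 p, (0:ℝ) ≤ b^2 * (a * c j)^2 := by
    intro j _; positivity
  have hPP : ∏ j ∈ Finset.Ico 1 p, (b^2 * (a * c j)^2)
      ≤ ∏ j ∈ Finset.Ico 1 p, (G j * G (2*p - j)) :=
    Finset.prod_le_prod hnonneg hpair
  -- the product of cotangents is 1
  have hcot : ∏ j ∈ Finset.Ico 1 p, c j = 1 := by
    apply Finset.prod_involution (fun j _ => p - j)
    · intro j hj
      rw [Finset.mem_Ico] at hj
      have hcast : ((p - j:ℕ):ℝ) = (p:ℝ) - (j:ℝ) := by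
        push_cast [Nat.cast_sub (by omega : j ≤ p)]; ring
      have hang : x (p - j) = π/2 - x j := by
        simp only [hxdef, hcast]; field_simp
      have hs := hsin j hj.1 (by omega)
      have hxltp : x j < π/2 := by
        have h1 : (j:ℝ) < (p:ℝ) := by exact_mod_cast hj.2
        simp only [hxdef]
        rw [div_lt_iff₀ (by linarith)]
        nlinarith
      have hcpos : 0 < Real.cos (x j) :=
        Real.cos_pos_of_mem_Ioo ⟨by linarith [hxpos j hj.1], hxltp⟩
      simp only [hcdef, hang, Real.cos_pi_div_two_sub, Real.sin_pi_div_two_sub]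
      field_simp
    · intro j hj hne heq
      rw [Finset.mem_Ico] at hj
      apply hne
      have hp2j : p = 2*j := by omega
      have hj0 : (0:ℝ) < (j:ℝ) := by exact_mod_cast hj.1
      have hang : x j = π/4 := by
        simp only [hxdef, hp2j]; push_cast; field_simp; ring
      simp only [hcdef, hang, Real.cos_pi_div_four, Real.sin_pi_div_four]
      exact div_self (by positivity)
    · intro j hj; rw [Finset.mem_Ico] at *; omega
    · intro j hj; rw [Finset.mem_Ico] at hj; omega
  -- value of the bound product
  have hval : ∏ j ∈ Finset.Ico 1 p, (b^2 * (a * c j)^2) = (a*b)^(2*(p-1)) := by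
    have h1 : ∀ j ∈ Finset.Ico 1 p, b^2 * (a * c j)^2 = (a*b)^2 * (c j)^2 := by
      intro j _; ring
    rw [Finset.prod_congr rfl h1, Finset.prod_mul_distrib, Finset.prod_const,
      Finset.prod_pow, hcot, Nat.card_Ico, one_pow, mul_one, ← pow_mul]
  -- middle factor
  have hGp : b^2 ≤ G p := by
    simp only [hGdef]; exact le_add_of_nonneg_right (sq_nonneg _)
  -- assemble
  have hstep : b^2 * (a*b)^(2*(p-1)) ≤ G p * ∏ j ∈ Finset.Ico 1 p, (G j * G (2*p - j)) := by
    refine mul_le_mul hGp ?_ ?_ ?_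
    · rw [← hval]; exact hPP
    · rw [← hval]
      exact Finset.prod_nonneg hnonneg
    · simp only [hGdef]; positivity
  have hfin : b ^ (2*p) * an ^ (2*(p-1)) < b^2 * (a*b)^(2*(p-1)) := by
    have h1 : b^2 * (a*b)^(2*(p-1)) = b^(2*p) * a^(2*(p-1)) := by
      rw [mul_pow]
      have : 2*p = 2*(p-1) + 2 := by omega
      rw [this, pow_add]
      ring
    rw [h1]
    have h2 : an^(2*(p-1)) < a^(2*(p-1)) :=
      pow_lt_pow_left₀ ha han0.le (by omega)
    exact mul_lt_mul_of_pos_left h2 (by positivity)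
  calc b ^ (2*p) * an ^ (2*(p-1)) < b^2 * (a*b)^(2*(p-1)) := hfin
    _ ≤ _ := hstep
end

section
/- Let n = 2p + 1 with p ≥ 1 an integer, set a_n = n^{1/(n-1)} - 1 and α_j = sin(2jπ/n)/(1 - cos(2jπ/n)) for 1 ≤ j ≤ n - 1. Let a be a real number with a > a_{2p+1} and let b > 0. Then for every y ∈ ℝ, ∏_{j=1}^{2p} ( b² + (y - (a/2)·α_j)² ) > b^{2p}·a_{2p+1}^{2p}·3^{-p}. -/
open Real Finset

-- pairing lemma
lemma pair_prod {M : Type*} [CommMonoid M] (p : ℕ) (f : ℕ → M) :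
    ∏ j ∈ Finset.Icc 1 (2*p), f j = ∏ j ∈ Finset.Icc 1 p, (f j * f (2*p+1-j)) := by
  have h1 : Finset.Icc 1 (2*p) = Finset.Icc 1 p ∪ Finset.Icc (p+1) (2*p) := by
    ext x; simp only [Finset.mem_Icc, Finset.mem_union]; omega
  have h2 : Disjoint (Finset.Icc 1 p) (Finset.Icc (p+1) (2*p)) := by
    simp only [Finset.disjoint_left, Finset.mem_Icc]; omega
  rw [h1, Finset.prod_union h2, Finset.prod_mul_distrib]
  congr 1
  refine (Finset.prod_nbij' (fun j => 2*p+1-j) (fun j => 2*p+1-j) ?_ ?_ ?_ ?_ ?_).symm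
  · intro a ha; simp only [Finset.mem_Icc] at *; omega
  · intro a ha; simp only [Finset.mem_Icc] at *; omega
  · intro a ha; simp only [Finset.mem_Icc] at *; omega
  · intro a ha; simp only [Finset.mem_Icc] at *; omega
  · intro a ha; rfl

-- range version
lemma icc_to_range {M : Type*} [CommMonoid M] (m : ℕ) (f : ℕ → M) :
    ∏ j ∈ Finset.Icc 1 m, f j = ∏ k ∈ Finset.range m, f (k+1) := by
  refine Finset.prod_nbij' (fun j => j - 1) (fun k => k + 1) ?_ ?_ ?_ ?_ ?_
  · intro a ha; simp only [Finset.mem_Icc, Finset.mem_range] at *; omega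
  · intro a ha; simp only [Finset.mem_Icc, Finset.mem_range] at *; omega
  · intro a ha; simp only [Finset.mem_Icc] at ha; omega
  · intro a _; omega
  · intro a ha; simp only [Finset.mem_Icc] at ha; congr 1; omega


noncomputable def alph (n j : ℕ) : ℝ :=
  Real.sin (2 * j * Real.pi / n) / (1 - Real.cos (2 * j * Real.pi / n))

-- cos ≠ 1 in the relevant range
lemma cos_ne_one (n j : ℕ) (hj : 1 ≤ j) (hjn : j ≤ n - 1) (hn : 2 ≤ n) :
    Real.cos (2 * j * Real.pi / n) ≠ 1 := by
  have hπ := Real.pi_pos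
  have hn0 : (0:ℝ) < n := by positivity
  have hj0 : (0:ℝ) < j := by exact_mod_cast hj
  have hjn' : (j:ℝ) < n := by
    have : j < n := by omega
    exact_mod_cast this
  have h1 : 0 < 2 * (j:ℝ) * Real.pi / n := by positivity
  have h2 : 2 * (j:ℝ) * Real.pi / n < 2 * Real.pi := by
    rw [div_lt_iff₀ hn0]
    nlinarith
  intro h
  rw [Real.cos_eq_one_iff_of_lt_of_lt (by linarith) h2] at h
  linarith

-- the complex per-term identity
lemma key_complex (n j : ℕ) (hj : 1 ≤ j) (hjn : j ≤ n - 1) (hn : 2 ≤ n) :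
    (1 : ℂ) + Complex.exp (2 * Real.pi * Complex.I / n) ^ j
      = Complex.I * (alph n j : ℂ) * (1 - Complex.exp (2 * Real.pi * Complex.I / n) ^ j) := by
  have hn0 : (n:ℂ) ≠ 0 := by
    have : 0 < n := by omega
    exact_mod_cast Nat.cast_ne_zero.mpr (by omega)
  set θ : ℝ := 2 * j * Real.pi / n with hθ
  have hexp : Complex.exp (2 * Real.pi * Complex.I / n) ^ j = Complex.exp (θ * Complex.I) := by
    rw [← Complex.exp_nat_mul]
    congr 1
    rw [hθ]; push_cast; field_simp
  rw [hexp, Complex.exp_mul_I]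
  set c := Real.cos θ
  set s := Real.sin θ
  have hc : Complex.cos (θ:ℂ) = (c:ℂ) := by rw [← Complex.ofReal_cos]
  have hs : Complex.sin (θ:ℂ) = (s:ℂ) := by rw [← Complex.ofReal_sin]
  rw [hc, hs]
  have hcne : (1:ℝ) - c ≠ 0 := sub_ne_zero.mpr (cos_ne_one n j hj hjn hn).symm
  have hpyth : s^2 + c^2 = 1 := Real.sin_sq_add_cos_sq θ
  have hα : alph n j = s / (1 - c) := rfl
  have hαc : alph n j * (1 - c) = s := by rw [hα]; field_simp
  have hαs : alph n j * s = 1 + c := by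
    rw [hα, div_mul_eq_mul_div, div_eq_iff hcne]; nlinarith
  have hαc' : (alph n j : ℂ) * (1 - (c:ℂ)) = (s:ℂ) := by exact_mod_cast congrArg Complex.ofReal hαc
  have hαs' : (alph n j : ℂ) * (s:ℂ) = 1 + (c:ℂ) := by exact_mod_cast congrArg Complex.ofReal hαs
  linear_combination -hαs' - Complex.I * hαc' + ((alph n j : ℂ) * (s:ℂ)) * Complex.I_sq


lemma alpha_prod (p : ℕ) (hp : 1 ≤ p) :
    ∏ j ∈ Finset.Icc 1 (2*p), alph (2*p+1) j = (-1:ℝ)^p / ((2*p+1 : ℕ) : ℝ) := by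
  set μ : ℂ := Complex.exp (2 * Real.pi * Complex.I / ((2*p+1 : ℕ):ℂ)) with hμ
  have hprim : IsPrimitiveRoot μ (2*p+1) := Complex.isPrimitiveRoot_exp _ (by omega)
  have hprim2 : IsPrimitiveRoot (μ^2) (2*p+1) :=
    hprim.pow_of_coprime 2 (Nat.coprime_two_left.mpr ⟨p, rfl⟩)
  have h2 : ∏ k ∈ Finset.range (2*p), (1 - μ^(k+1)) = ((2*p : ℕ):ℂ) + 1 :=
    hprim.prod_one_sub_pow_eq_order
  have h3 : ∏ k ∈ Finset.range (2*p), (1 - (μ^(k+1))^2) = ((2*p : ℕ):ℂ) + 1 := by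
    have := hprim2.prod_one_sub_pow_eq_order
    rw [← this]
    apply Finset.prod_congr rfl
    intro k _
    rw [← pow_mul, ← pow_mul, Nat.mul_comm]
  have hne : ((2*p : ℕ):ℂ) + 1 ≠ 0 := by
    have : (((2*p : ℕ):ℂ) + 1) = ((2*p+1 : ℕ) : ℂ) := by push_cast; ring
    rw [this]
    exact Nat.cast_ne_zero.mpr (by omega)
  have h5 : ∏ k ∈ Finset.range (2*p), (1 + μ^(k+1)) = 1 := by
    have h4 : (∏ k ∈ Finset.range (2*p), (1 + μ^(k+1))) * ∏ k ∈ Finset.range (2*p), (1 - μ^(k+1))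
        = ∏ k ∈ Finset.range (2*p), (1 - (μ^(k+1))^2) := by
      rw [← Finset.prod_mul_distrib]
      apply Finset.prod_congr rfl
      intro k _; ring
    rw [h2, h3] at h4
    exact mul_right_cancel₀ hne (by rw [h4, one_mul])
  have h7 : ∏ k ∈ Finset.range (2*p), (1 + μ^(k+1))
      = (∏ k ∈ Finset.range (2*p), (Complex.I * ((alph (2*p+1) (k+1) : ℝ) : ℂ)))
        * ∏ k ∈ Finset.range (2*p), (1 - μ^(k+1)) := by
    rw [← Finset.prod_mul_distrib]
    apply Finset.prod_congr rfl
    intro k hk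
    simp only [Finset.mem_range] at hk
    exact key_complex (2*p+1) (k+1) (by omega) (by omega) (by omega)
  rw [h5, h2] at h7
  have h8 : ∏ k ∈ Finset.range (2*p), (Complex.I * ((alph (2*p+1) (k+1) : ℝ) : ℂ))
      = (-1:ℂ)^p * ((∏ k ∈ Finset.range (2*p), alph (2*p+1) (k+1) : ℝ) : ℂ) := by
    rw [Finset.prod_mul_distrib, Finset.prod_const, Finset.card_range, Complex.ofReal_prod]
    congr 1
    rw [pow_mul, Complex.I_sq]
  rw [h8] at h7
  set Xr : ℝ := ∏ k ∈ Finset.range (2*p), alph (2*p+1) (k+1) with hXr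
  have hsq : ((-1:ℂ)^p)*((-1:ℂ)^p) = 1 := by
    rw [← pow_add, ← two_mul, pow_mul]; norm_num
  have hXn : (Xr:ℂ) * (((2*p:ℕ):ℂ)+1) = (-1:ℂ)^p := by
    linear_combination (-(-1:ℂ)^p) * h7 - ((Xr:ℂ) * (((2*p:ℕ):ℂ)+1)) * hsq
  have hXr' : Xr * (((2*p:ℕ):ℝ)+1) = (-1:ℝ)^p := by exact_mod_cast hXn
  have hne' : ((2*p+1:ℕ):ℝ) ≠ 0 := Nat.cast_ne_zero.mpr (by omega)
  rw [icc_to_range]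
  rw [eq_div_iff hne']
  rw [← hXr']
  push_cast
  ring


lemma nat_le_pow (p : ℕ) : 2*p+1 ≤ 3^p := by
  induction p with
  | zero => norm_num
  | succ q ih =>
    have h1 : 1 ≤ 3^q := Nat.one_le_pow _ _ (by norm_num)
    calc 2*(q+1)+1 = (2*q+1) + 2 := by ring
    _ ≤ 3^q + 2 := by omega
    _ ≤ 3^(q+1) := by rw [pow_succ]; omega

lemma alph_neg (p j : ℕ) (hj : 1 ≤ j) (hjp : j ≤ p) :
    alph (2*p+1) (2*p+1-j) = - alph (2*p+1) j := by
  unfold alph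
  have hn0 : ((2*p+1 : ℕ):ℝ) ≠ 0 := Nat.cast_ne_zero.mpr (by omega)
  have hcast : ((2*p+1-j : ℕ):ℝ) = ((2*p+1:ℕ):ℝ) - j := by
    have : j ≤ 2*p+1 := by omega
    push_cast [Nat.cast_sub this]; ring
  have hθ : 2 * ((2*p+1-j : ℕ):ℝ) * Real.pi / ((2*p+1:ℕ):ℝ)
      = 2*Real.pi - 2 * (j:ℝ) * Real.pi / ((2*p+1:ℕ):ℝ) := by
    rw [hcast]; field_simp
  rw [hθ]
  rw [show (2*Real.pi - 2 * (j:ℝ) * Real.pi / ((2*p+1:ℕ):ℝ))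
      = 2*Real.pi + (-(2 * (j:ℝ) * Real.pi / ((2*p+1:ℕ):ℝ))) by ring]
  rw [Real.sin_add, Real.cos_add, Real.sin_two_pi, Real.cos_two_pi, Real.sin_neg, Real.cos_neg]
  ring_nf

/-- Lemma 5 (odd case, bound on `C_{2p+1}(y)`): for `a > a_{2p+1}` and `b > 0`,
`∏_{j=1}^{2p} (b² + (y - (a/2)α_j)²) > b^{2p} a_{2p+1}^{2p} 3^{-p}` for all real `y`. -/
theorem stmt_18 (p : ℕ) (hp : 1 ≤ p) (n : ℕ) (hn : n = 2 * p + 1)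
    (an : ℝ) (han : an = (n : ℝ) ^ ((1 : ℝ) / ((n : ℝ) - 1)) - 1)
    (a : ℝ) (ha : an < a) (b : ℝ) (hb : 0 < b) :
    ∀ y : ℝ, ∏ j ∈ Finset.Icc 1 (2 * p),
        (b ^ 2 + (y - (a / 2) * (Real.sin (2 * j * Real.pi / n) /
          (1 - Real.cos (2 * j * Real.pi / n)))) ^ 2)
      > b ^ (2 * p) * an ^ (2 * p) * (3 : ℝ) ^ (-(p : ℝ)) := by
  subst hn
  intro y
  -- positivity of an
  have hnR : (1:ℝ) < ((2*p+1 : ℕ):ℝ) := by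
    have : 1 < 2*p+1 := by omega
    exact_mod_cast this
  have han0 : 0 < an := by
    rw [han]
    have h1 : (1:ℝ) < ((2*p+1:ℕ):ℝ) ^ ((1 : ℝ) / (((2*p+1:ℕ):ℝ) - 1)) := by
      refine (Real.one_lt_rpow_iff_of_pos (by linarith)).mpr (Or.inl ⟨hnR, ?_⟩)
      have : (0:ℝ) < ((2*p+1:ℕ):ℝ) - 1 := by linarith
      positivity
    linarith
  have ha0 : 0 < a := lt_trans han0 ha
  -- main product bound
  have hF : ∀ j ∈ Finset.Icc 1 p,
      a^2 * b^2 * (alph (2*p+1) j)^2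
        ≤ (b ^ 2 + (y - (a / 2) * alph (2*p+1) j) ^ 2)
          * (b ^ 2 + (y - (a / 2) * alph (2*p+1) (2*p+1-j)) ^ 2) := by
    intro j hj
    simp only [Finset.mem_Icc] at hj
    rw [alph_neg p j hj.1 hj.2]
    set t := (a/2) * alph (2*p+1) j with ht
    have h4 : a^2 * b^2 * (alph (2*p+1) j)^2 = 4 * b^2 * t^2 := by rw [ht]; ring
    rw [h4, show a / 2 * -alph (2*p+1) j = -t by rw [ht]; ring]
    nlinarith [sq_nonneg (b^2 + y^2 - t^2)]
  -- product over pairs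
  have hprodpair : ∏ j ∈ Finset.Icc 1 (2*p),
      (b ^ 2 + (y - (a / 2) * alph (2*p+1) j) ^ 2)
      = ∏ j ∈ Finset.Icc 1 p, ((b ^ 2 + (y - (a / 2) * alph (2*p+1) j) ^ 2)
          * (b ^ 2 + (y - (a / 2) * alph (2*p+1) (2*p+1-j)) ^ 2)) :=
    pair_prod p _
  -- the alpha square product
  have halpha2 : ∏ j ∈ Finset.Icc 1 p, (alph (2*p+1) j)^2 = 1 / ((2*p+1:ℕ):ℝ) := by
    have h1 : ∏ j ∈ Finset.Icc 1 (2*p), alph (2*p+1) j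
        = ∏ j ∈ Finset.Icc 1 p, (alph (2*p+1) j * alph (2*p+1) (2*p+1-j)) := pair_prod p _
    have h2 : ∏ j ∈ Finset.Icc 1 p, (alph (2*p+1) j * alph (2*p+1) (2*p+1-j))
        = (-1:ℝ)^p * ∏ j ∈ Finset.Icc 1 p, (alph (2*p+1) j)^2 := by
      calc ∏ j ∈ Finset.Icc 1 p, (alph (2*p+1) j * alph (2*p+1) (2*p+1-j))
          = ∏ j ∈ Finset.Icc 1 p, ((-1) * (alph (2*p+1) j)^2) := by
            apply Finset.prod_congr rfl
            intro j hj
            simp only [Finset.mem_Icc] at hj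
            rw [alph_neg p j hj.1 hj.2]
            ring
        _ = (-1:ℝ)^p * ∏ j ∈ Finset.Icc 1 p, (alph (2*p+1) j)^2 := by
            rw [Finset.prod_mul_distrib, Finset.prod_const, Nat.card_Icc]
            simp
    have h3 := alpha_prod p hp
    rw [h1, h2] at h3
    have hne : ((-1:ℝ)^p) ≠ 0 := by apply pow_ne_zero; norm_num
    have hneN : ((2*p+1:ℕ):ℝ) ≠ 0 := Nat.cast_ne_zero.mpr (by omega)
    have h3' : ((-1:ℝ)^p) * ((∏ j ∈ Finset.Icc 1 p, (alph (2*p+1) j)^2) * ((2*p+1:ℕ):ℝ))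
        = ((-1:ℝ)^p) * 1 := by
      rw [mul_one, ← mul_assoc, h3, div_mul_cancel₀ _ hneN]
    have h4 := mul_left_cancel₀ hne h3'
    rw [eq_div_iff hneN]
    linarith [h4]
  -- combine
  have hstep : ∏ j ∈ Finset.Icc 1 p, (a^2*b^2*(alph (2*p+1) j)^2)
      ≤ ∏ j ∈ Finset.Icc 1 p, ((b ^ 2 + (y - (a / 2) * alph (2*p+1) j) ^ 2)
          * (b ^ 2 + (y - (a / 2) * alph (2*p+1) (2*p+1-j)) ^ 2)) := by
    apply Finset.prod_le_prod
    · intro j hj; positivity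
    · exact hF
  have hval : ∏ j ∈ Finset.Icc 1 p, (a^2*b^2*(alph (2*p+1) j)^2)
      = b^(2*p) * a^(2*p) / ((2*p+1:ℕ):ℝ) := by
    rw [Finset.prod_mul_distrib, Finset.prod_const, Nat.card_Icc, halpha2]
    have hc : p + 1 - 1 = p := by omega
    rw [hc, mul_pow, ← pow_mul, ← pow_mul]
    ring
  -- numeric comparison
  have h3p : (3:ℝ) ^ (-(p:ℝ)) = ((3:ℝ)^p)⁻¹ := by
    rw [← Real.rpow_natCast 3 p, ← Real.rpow_neg (by norm_num)]
  have hpowlt : an^(2*p) < a^(2*p) := by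
    apply pow_lt_pow_left₀ ha han0.le (by omega)
  have hNle : ((2*p+1:ℕ):ℝ) ≤ (3:ℝ)^p := by
    have := nat_le_pow p
    calc ((2*p+1:ℕ):ℝ) ≤ ((3^p : ℕ):ℝ) := by exact_mod_cast this
      _ = (3:ℝ)^p := by push_cast; ring
  have hN0 : (0:ℝ) < ((2*p+1:ℕ):ℝ) := by positivity
  have hnum : b ^ (2*p) * an ^ (2*p) * (3:ℝ) ^ (-(p:ℝ))
      < b^(2*p) * a^(2*p) / ((2*p+1:ℕ):ℝ) := by
    rw [h3p, ← div_eq_mul_inv]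
    calc b ^ (2*p) * an ^ (2*p) / (3:ℝ)^p
        ≤ b ^ (2*p) * an ^ (2*p) / ((2*p+1:ℕ):ℝ) := by
          apply div_le_div_of_nonneg_left (by positivity) hN0 hNle
      _ < b^(2*p) * a^(2*p) / ((2*p+1:ℕ):ℝ) := by
          apply (div_lt_div_iff_of_pos_right hN0).mpr
          exact mul_lt_mul_of_pos_left hpowlt (by positivity)
  have hfinal : b ^ (2*p) * an ^ (2*p) * (3:ℝ) ^ (-(p:ℝ))
      < ∏ j ∈ Finset.Icc 1 (2*p), (b ^ 2 + (y - (a / 2) * alph (2*p+1) j) ^ 2) := by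
    calc b ^ (2*p) * an ^ (2*p) * (3:ℝ) ^ (-(p:ℝ))
        < b^(2*p) * a^(2*p) / ((2*p+1:ℕ):ℝ) := hnum
      _ = ∏ j ∈ Finset.Icc 1 p, (a^2*b^2*(alph (2*p+1) j)^2) := hval.symm
      _ ≤ _ := hstep
      _ = _ := hprodpair.symm
  exact hfinal
end

section
/- Let n ≥ 2 and let P(z) = ∏_{j=1}^{n}(z - z_j) be a monic polynomial of degree n whose zeros z_1, …, z_n all lie in the closed unit disk |z| ≤ 1, and suppose P(0) = 0 (i.e. some z_j equals 0). Then for every j ∈ {1, …, n} there exists w ∈ ℂ with P'(w) = 0 and |w - z_j| ≤ 1. -/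
/-!
If `a = z j` is `0`, any critical point will do, by Gauss–Lucas. Otherwise `P(a) = P(0)` says
that `P'` is apolar to `(X - a)^n - X^n`, whose zeros lie on the perpendicular bisector of `0`
and `a`. Grace's theorem for half-planes, proved by induction on the degree via Laguerre's
theorem on polar derivatives, then yields a zero `u` of `P'` with `Re (conj a * u) ≥ |a|² / 2`,
i.e. on the side of the bisector containing `a`. Since also `|u| ≤ 1` by Gauss–Lucas,
`|u - a|² = |u|² - 2 Re (conj a * u) + |a|² ≤ 1`.
-/

open Polynomial Finset
open scoped Nat ComplexConjugate

namespace Polynomial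

variable {R : Type*} [CommRing R]

/-- The polar derivative of `A` at `ζ`, `A` being regarded as of formal degree `m`. -/
noncomputable def polarDeriv (m : ℕ) (ζ : R) (A : R[X]) : R[X] :=
  C (m : R) * A + (C ζ - X) * derivative A

lemma coeff_polarDeriv (m : ℕ) (ζ : R) (A : R[X]) (i : ℕ) :
    (polarDeriv m ζ A).coeff i = ((m : R) - i) * A.coeff i + ζ * (i + 1) * A.coeff (i + 1) := by
  rcases i with _ | i
  · simp [polarDeriv, sub_mul, coeff_derivative]
  · simp only [polarDeriv, sub_mul, coeff_add, coeff_sub, coeff_C_mul, coeff_X_mul,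
      coeff_derivative]
    push_cast
    ring

lemma natDegree_polarDeriv_le {m : ℕ} (ζ : R) {A : R[X]} (hA : A.natDegree ≤ m + 1) :
    (polarDeriv (m + 1) ζ A).natDegree ≤ m := by
  refine natDegree_le_iff_coeff_eq_zero.2 fun i hi ↦ ?_
  rw [coeff_polarDeriv, coeff_eq_zero_of_natDegree_lt (p := A) (n := i + 1) (by omega)]
  rcases (Nat.succ_le_of_lt hi).eq_or_lt with rfl | hlt
  · simp
  · simp [coeff_eq_zero_of_natDegree_lt (hA.trans_lt hlt)]

/-- The classical apolarity form of two polynomials of formal degree `m`, scaled by `m!`. -/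
def apolarPairing (m : ℕ) (Q A : R[X]) : R :=
  ∑ x ∈ antidiagonal m, (-1) ^ x.1 * (x.1 ! * x.2 ! : R) * Q.coeff x.1 * A.coeff x.2

lemma apolarPairing_zero (Q A : R[X]) : apolarPairing 0 Q A = Q.coeff 0 * A.coeff 0 := by
  simp [apolarPairing]

lemma apolarPairing_X_sub_C_mul {m : ℕ} (ζ : R) {S : R[X]} (A : R[X])
    (hS : S.coeff (m + 1) = 0) :
    apolarPairing (m + 1) ((X - C ζ) * S) A = -apolarPairing m S (polarDeriv (m + 1) ζ A) := by
  simp only [apolarPairing, sub_mul, coeff_sub, coeff_C_mul, mul_sub, sum_sub_distrib]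
  rw [Nat.sum_antidiagonal_succ, Nat.sum_antidiagonal_succ', ← sum_neg_distrib]
  simp only [mul_coeff_zero, coeff_X_zero, coeff_X_mul, hS, zero_mul, mul_zero, zero_add]
  rw [← sum_sub_distrib]
  refine sum_congr rfl fun x hx ↦ ?_
  have hm : ((m + 1 : ℕ) : R) - x.2 = x.1 + 1 := by
    rw [← mem_antidiagonal.1 hx]
    push_cast
    ring
  rw [coeff_polarDeriv, hm, Nat.factorial_succ, Nat.factorial_succ]
  push_cast
  ring

lemma natDegree_X_sub_C_pow_sub_X_pow_le (a : R) (m : ℕ) :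
    ((X - C a) ^ (m + 1) - X ^ (m + 1)).natDegree ≤ m := by
  refine natDegree_le_iff_coeff_eq_zero.2 fun i hi ↦ ?_
  rw [show X - C a = X + C (-a) by rw [C_neg, sub_eq_add_neg], coeff_sub, coeff_X_add_C_pow,
    coeff_X_pow]
  rcases (Nat.succ_le_of_lt hi).eq_or_lt with rfl | hlt
  · simp
  · simp [Nat.choose_eq_zero_of_lt hlt, hlt.ne']

lemma apolarPairing_derivative_X_sub_C_pow_sub_X_pow {m : ℕ} {P : R[X]}
    (hP : P.natDegree ≤ m + 1) (a : R) :
    apolarPairing m (derivative P) ((X - C a) ^ (m + 1) - X ^ (m + 1))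
      = -((m + 1)! : R) * (P.eval a - P.eval 0) := by
  have hterm : ∀ x ∈ antidiagonal m,
      (-1) ^ x.1 * (x.1 ! * x.2 ! : R) * (derivative P).coeff x.1
          * ((X - C a) ^ (m + 1) - X ^ (m + 1)).coeff x.2
        = -((m + 1)! : R) * (P.coeff (x.1 + 1) * a ^ (x.1 + 1)) := by
    rintro ⟨i, j⟩ hx
    obtain rfl : i + j = m := mem_antidiagonal.1 hx
    have hchoose := Nat.add_choose_mul_factorial_mul_factorial (i + 1) j
    rw [show i + 1 + j = i + j + 1 by omega, Nat.factorial_succ i] at hchoose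
    have hsign : ((-1) ^ i * (-1) ^ (i + 1) : R) = -1 := by
      rw [← pow_add, show i + (i + 1) = 2 * i + 1 by ring, pow_succ, pow_mul]
      simp
    rw [show X - C a = X + C (-a) by rw [C_neg, sub_eq_add_neg], coeff_sub, coeff_X_add_C_pow,
      coeff_X_pow, if_neg (by omega), show i + j + 1 - j = i + 1 by omega, neg_pow,
      coeff_derivative]
    calc _ = ((-1) ^ i * (-1) ^ (i + 1) : R)
              * (((i + j + 1).choose j * ((i + 1) * i !) * j ! : ℕ) : R)
              * (P.coeff (i + 1) * a ^ (i + 1)) := by push_cast; ring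
      _ = _ := by rw [hsign, hchoose]; ring
  rw [apolarPairing, sum_congr rfl hterm, ← mul_sum, Nat.sum_antidiagonal_eq_sum_range_succ_mk,
    eval_eq_sum_range' (n := m + 2) (by omega) a, sum_range_succ' _ (m + 1),
    ← coeff_zero_eq_eval_zero]
  simp

end Polynomial

lemma norm_multiset_sum_sub_card_nsmul_le {E : Type*} [SeminormedAddCommGroup E]
    (s : Multiset E) (c : E) {ρ : ℝ} (h : ∀ x ∈ s, ‖x - c‖ ≤ ρ) :
    ‖s.sum - Multiset.card s • c‖ ≤ Multiset.card s * ρ := by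
  induction s using Multiset.induction with
  | empty => simp
  | cons x s ih =>
    have hx := h x (Multiset.mem_cons_self x s)
    have hs := ih fun y hy ↦ h y (Multiset.mem_cons_of_mem hy)
    calc ‖(x ::ₘ s).sum - Multiset.card (x ::ₘ s) • c‖
        = ‖(x - c) + (s.sum - Multiset.card s • c)‖ := by
          rw [Multiset.sum_cons, Multiset.card_cons, succ_nsmul]
          congr 1
          abel
      _ ≤ ρ + Multiset.card s * ρ := (norm_add_le _ _).trans (add_le_add hx hs)
      _ = Multiset.card (x ::ₘ s) * ρ := by rw [Multiset.card_cons]; push_cast; ring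

namespace Complex

lemma le_re_inv_iff_norm_sub_le {w : ℂ} (hw : w ≠ 0) {δ : ℝ} (hδ : 0 < δ) :
    δ ≤ w⁻¹.re ↔ ‖w - ((2 * δ)⁻¹ : ℝ)‖ ≤ (2 * δ)⁻¹ := by
  set ρ := (2 * δ)⁻¹
  have hρ : 0 < ρ := by positivity
  have hδρ : 2 * δ * ρ = 1 := mul_inv_cancel₀ (by positivity)
  clear_value ρ
  rw [inv_re, le_div_iff₀ (normSq_pos.2 hw), ← sq_le_sq₀ (norm_nonneg _) hρ.le,
    Complex.sq_norm, normSq_sub, normSq_ofReal, conj_ofReal, re_mul_ofReal]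
  constructor <;> intro h
  · linear_combination (2 * ρ) * h - normSq w * hδρ
  · linear_combination δ * h + w.re * hδρ

lemma le_re_natCast_div_sum_inv {s : Multiset ℂ} {δ : ℝ} {m : ℕ} (hδ : 0 < δ)
    (hs : ∀ v ∈ s, δ ≤ v.re) (hcard : Multiset.card s ≤ m) (hW : (s.map (·⁻¹)).sum ≠ 0) :
    δ ≤ ((m : ℂ) / (s.map (·⁻¹)).sum).re := by
  -- The `v⁻¹` lie in the closed disc with diameter `[0, δ⁻¹]`; this disc is convex and contains
  -- `0`, hence so does `W / m`, and we invert back.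
  set W := (s.map (·⁻¹)).sum
  set ρ := (2 * δ)⁻¹
  have hρ : 0 < ρ := by positivity
  have hm : 0 < m := Nat.pos_of_ne_zero <| by
    rintro rfl
    exact hW (by simp [W, Multiset.card_eq_zero.1 (Nat.le_zero.1 hcard)])
  have hmC : (m : ℂ) ≠ 0 := Nat.cast_ne_zero.2 hm.ne'
  have hdisc : ∀ w ∈ s.map (·⁻¹), ‖w - (ρ : ℂ)‖ ≤ ρ := by
    simp only [Multiset.mem_map]
    rintro _ ⟨v, hv, rfl⟩
    have hv0 : v ≠ 0 := by rintro rfl; linarith [hs 0 hv, zero_re]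
    exact (le_re_inv_iff_norm_sub_le (inv_ne_zero hv0) hδ).1 (by rw [inv_inv]; exact hs v hv)
  have hsum := norm_multiset_sum_sub_card_nsmul_le _ _ hdisc
  rw [Multiset.card_map, nsmul_eq_mul] at hsum
  have hWm : ‖W - m * (ρ : ℂ)‖ ≤ m * ρ :=
    calc ‖W - m * (ρ : ℂ)‖
        = ‖(W - Multiset.card s * (ρ : ℂ)) - ((m - Multiset.card s : ℝ) * ρ : ℝ)‖ := by
          congr 1; push_cast; ring
      _ ≤ Multiset.card s * ρ + (m - Multiset.card s) * ρ := by
          refine (norm_sub_le _ _).trans (add_le_add hsum ?_)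
          rw [norm_real, Real.norm_eq_abs, abs_of_nonneg]
          exact mul_nonneg (sub_nonneg.2 (by exact_mod_cast hcard)) hρ.le
      _ = m * ρ := by ring
  have hWdiv : ‖W / m - (ρ : ℂ)‖ ≤ ρ := by
    rw [div_sub' hmC, norm_div, norm_natCast, div_le_iff₀ (Nat.cast_pos.2 hm)]
    simpa [mul_comm] using hWm
  rw [← inv_div]
  exact (le_re_inv_iff_norm_sub_le (div_ne_zero hW hmC) hδ).2 hWdiv

lemma sq_norm_sub (u a : ℂ) : ‖u - a‖ ^ 2 = ‖u‖ ^ 2 + ‖a‖ ^ 2 - 2 * (conj a * u).re := by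
  simp only [Complex.sq_norm, normSq_sub, mul_comm u]

lemma re_conj_mul_eq_of_isRoot_X_sub_C_pow_sub_X_pow {n : ℕ} (hn : n ≠ 0) {a r : ℂ}
    (hr : ((X - C a) ^ n - X ^ n).IsRoot r) : (conj a * r).re = ‖a‖ ^ 2 / 2 := by
  rw [IsRoot, eval_sub, eval_pow, eval_pow, eval_sub, eval_X, eval_C, sub_eq_zero] at hr
  have hnorm : ‖r - a‖ = ‖r‖ := (pow_left_inj₀ (norm_nonneg _) (norm_nonneg _) hn).1 <| by
    simpa only [norm_pow] using congrArg norm hr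
  have := sq_norm_sub r a
  rw [hnorm] at this
  linarith

lemma norm_sub_le_one_of_le_re_conj_mul {u a : ℂ} (hu : ‖u‖ ≤ 1)
    (h : ‖a‖ ^ 2 / 2 ≤ (conj a * u).re) : ‖u - a‖ ≤ 1 := by
  have := sq_norm_sub u a
  refine (pow_le_one_iff_of_nonneg (norm_nonneg _) two_ne_zero).1 ?_
  nlinarith [norm_nonneg u]

end Complex

namespace Polynomial

theorem mem_of_isRoot_derivative_of_convex {P : ℂ[X]} (hP : 0 < P.degree) {S : Set ℂ}
    (hS : Convex ℝ S) (hroots : ∀ r, P.IsRoot r → r ∈ S) {u : ℂ}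
    (hu : (derivative P).IsRoot u) : u ∈ S := by
  have hP' : derivative P ≠ 0 := derivative_ne_zero.2 (natDegree_pos_iff_degree_pos.2 hP).ne'
  refine convexHull_min (fun r hr ↦ ?_) hS
    (rootSet_derivative_subset_convexHull_rootSet hP (mem_rootSet.2 ⟨hP', by simpa using hu⟩))
  exact hroots r (by simpa using (mem_rootSet.1 hr).2)

/-- Laguerre's theorem, for a closed half-plane. -/
theorem le_re_mul_of_isRoot_polarDeriv {m : ℕ} (hm : m ≠ 0) {A : ℂ[X]} (hA : A.natDegree ≤ m)
    {b ζ u : ℂ} {c : ℝ} (hroots : ∀ r, A.IsRoot r → c ≤ (b * r).re) (hζ : (b * ζ).re < c)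
    (hu : (polarDeriv m ζ A).IsRoot u) : c ≤ (b * u).re := by
  -- Via `A'(u) / A(u) = ∑ 1 / (u - r)`, a zero `u` outside the half-plane would give
  -- `b (ζ - u) = m / ∑ (b (r - u))⁻¹`, whose real part is at least `c - re (b u)`.
  by_contra! hlt
  set δ := c - (b * u).re
  have hδ : 0 < δ := sub_pos.2 hlt
  have hAu : A.eval u ≠ 0 := fun h ↦ hlt.not_ge (hroots u h)
  set s := A.roots.map fun r ↦ b * (r - u)
  set W := (s.map (·⁻¹)).sum
  have hs : ∀ v ∈ s, δ ≤ v.re := by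
    simp only [s, Multiset.mem_map]
    rintro _ ⟨r, hr, rfl⟩
    have := hroots r (isRoot_of_mem_roots hr)
    simp only [mul_sub, Complex.sub_re, δ]
    linarith
  have hlogDeriv : (A.roots.map fun r ↦ 1 / (u - r)).sum = -b * W := by
    simp only [W, s, Multiset.map_map, ← Multiset.sum_map_mul_left]
    refine congrArg Multiset.sum (Multiset.map_congr rfl fun r hr ↦ ?_)
    have hb : b ≠ 0 := by
      rintro rfl
      have := hs _ (Multiset.mem_map_of_mem _ hr)
      rw [zero_mul, Complex.zero_re] at this
      linarith
    rw [Function.comp_apply, one_div, mul_inv, ← mul_assoc, neg_mul, mul_inv_cancel₀ hb,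
      neg_one_mul, ← inv_neg, neg_sub]
  have hpolar : (m : ℂ) + (ζ - u) * (-b * W) = 0 := by
    rw [IsRoot, polarDeriv, eval_add, eval_mul, eval_mul,
      (IsAlgClosed.splits A).eval_derivative_eq_eval_mul_sum hAu, hlogDeriv] at hu
    simp only [eval_C, eval_sub, eval_X] at hu
    refine (mul_eq_zero.1 ?_).resolve_left hAu
    linear_combination hu
  have hW : W ≠ 0 := by
    rintro h
    rw [h, mul_zero, mul_zero, add_zero, Nat.cast_eq_zero] at hpolar
    exact hm hpolar
  have hζu : b * ζ - b * u = m / W := by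
    field_simp
    linear_combination -hpolar
  have hkey := Complex.le_re_natCast_div_sum_inv hδ hs
    (by simpa [s] using (card_roots' A).trans hA) hW
  rw [← hζu, Complex.sub_re] at hkey
  linarith

/-- Grace's theorem, for a closed half-plane. -/
theorem exists_isRoot_le_re_mul_of_apolarPairing_eq_zero {b : ℂ} {c : ℝ} (m : ℕ) {Q A : ℂ[X]}
    (hQ : Q ≠ 0) (hQm : Q.natDegree = m) (hA : A ≠ 0) (hAm : A.natDegree ≤ m)
    (hQA : apolarPairing m Q A = 0) (hroots : ∀ r, A.IsRoot r → c ≤ (b * r).re) :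
    ∃ u, Q.IsRoot u ∧ c ≤ (b * u).re := by
  induction m generalizing Q A with
  | zero =>
    have hQ0 : Q.coeff 0 ≠ 0 := by rwa [← hQm, coeff_natDegree, leadingCoeff_ne_zero]
    have hA0 : A.coeff 0 ≠ 0 := by
      rwa [← Nat.le_zero.1 hAm, coeff_natDegree, leadingCoeff_ne_zero]
    exact absurd (apolarPairing_zero Q A ▸ hQA) (mul_ne_zero hQ0 hA0)
  | succ m ih =>
    by_contra! hnone
    obtain ⟨ζ, hζ⟩ := Complex.exists_root <| (natDegree_pos_iff_degree_pos (p := Q)).1 (by omega)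
    set S := Q /ₘ (X - C ζ)
    have hQS : (X - C ζ) * S = Q := mul_divByMonic_eq_iff_isRoot.2 hζ
    have hS : S ≠ 0 := by
      rintro h
      rw [h, mul_zero] at hQS
      exact hQ hQS.symm
    have hSm : S.natDegree = m := by
      rw [natDegree_divByMonic _ (monic_X_sub_C ζ), hQm, natDegree_X_sub_C, Nat.add_sub_cancel]
    have hD : polarDeriv (m + 1) ζ A ≠ 0 := by
      intro h
      have hAζ := congrArg (eval ζ) h
      simp only [polarDeriv, eval_add, eval_mul, eval_C, eval_sub, eval_X, sub_self, zero_mul,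
        add_zero, eval_zero, mul_eq_zero] at hAζ
      exact (hnone ζ hζ).not_ge (hroots ζ (hAζ.resolve_left (Nat.cast_ne_zero.2 m.succ_ne_zero)))
    have hpair : apolarPairing m S (polarDeriv (m + 1) ζ A) = 0 := by
      rw [← neg_eq_zero, ← apolarPairing_X_sub_C_mul ζ A
        (coeff_eq_zero_of_natDegree_lt (by omega)), hQS, hQA]
    obtain ⟨u, hu, hcu⟩ := ih hS hSm hD (natDegree_polarDeriv_le ζ hAm) hpair
      fun r hr ↦ le_re_mul_of_isRoot_polarDeriv m.succ_ne_zero hAm hroots (hnone ζ hζ) hr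
    exact (hnone u (by rw [← hQS, IsRoot, eval_mul, hu.eq_zero, mul_zero])).not_ge hcu

end Polynomial

/-- Remark 2: Sendov's conjecture holds when `P(0) = 0` (zeros not necessarily simple). -/
theorem stmt_19 (n : ℕ) (hn : 2 ≤ n) (z : Fin n → ℂ)
    (hdisk : ∀ j, ‖z j‖ ≤ 1)
    (P : ℂ[X]) (hP : P = ∏ j : Fin n, (X - C (z j)))
    (h0 : P.eval 0 = 0) :
    ∀ j : Fin n, ∃ w : ℂ, (Polynomial.derivative P).eval w = 0 ∧ ‖w - z j‖ ≤ 1 := by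
  intro j
  obtain ⟨m, rfl⟩ : ∃ m, n = m + 2 := ⟨n - 2, by omega⟩
  have hPdeg : P.natDegree = m + 2 := by
    rw [hP, natDegree_finsetProd_X_sub_C_eq_card, card_univ, Fintype.card_fin]
  have hP'deg : (derivative P).natDegree = m + 1 := by rw [natDegree_derivative, hPdeg]; rfl
  have hP' : derivative P ≠ 0 := derivative_ne_zero.2 (by omega)
  have hroot : ∀ r, P.IsRoot r ↔ ∃ i, r = z i := fun r ↦ by
    simp [hP, IsRoot, eval_prod, prod_eq_zero_iff, sub_eq_zero]
  have hcrit : ∀ u, (derivative P).IsRoot u → ‖u‖ ≤ 1 := fun u hu ↦ by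
    refine mem_closedBall_zero_iff.1 <| mem_of_isRoot_derivative_of_convex
      (natDegree_pos_iff_degree_pos.1 (by omega)) (convex_closedBall 0 1) (fun r hr ↦ ?_) hu
    obtain ⟨i, rfl⟩ := (hroot r).1 hr
    exact mem_closedBall_zero_iff.2 (hdisk i)
  by_cases ha : z j = 0
  · obtain ⟨w, hw⟩ := Complex.exists_root <|
      (natDegree_pos_iff_degree_pos (p := derivative P)).1 (by omega)
    exact ⟨w, hw, by simpa [ha] using hcrit w hw⟩
  obtain ⟨u, hu, hau⟩ := exists_isRoot_le_re_mul_of_apolarPairing_eq_zero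
    (b := conj (z j)) (c := ‖z j‖ ^ 2 / 2) (A := (X - C (z j)) ^ (m + 2) - X ^ (m + 2))
    (m + 1) hP' hP'deg (fun h ↦ ha (by simpa using congrArg (eval 0) h))
    (natDegree_X_sub_C_pow_sub_X_pow_le _ _)
    (by rw [apolarPairing_derivative_X_sub_C_pow_sub_X_pow hPdeg.le, h0,
      ((hroot _).2 ⟨j, rfl⟩).eq_zero, sub_zero, mul_zero])
    (fun r hr ↦ (Complex.re_conj_mul_eq_of_isRoot_X_sub_C_pow_sub_X_pow (by omega) hr).ge)
  exact ⟨u, hu, Complex.norm_sub_le_one_of_le_re_conj_mul (hcrit u hu) hau⟩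
end
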